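/- arXiv:1505.04479 — 7 statements merged into one kernel-verified Lean document; each statement's English description precedes it below -/
import Mathlib

section
/- For all integers n and k with 2 ≤ k ≤ n, the number of permutations in S_n with empty peak set that end with an ascent to k is |P(∅;n)^{↗k}| = 2^{k−2}. -/
open Equiv

/-- Position `i` (1-based, with `1 < i < n`) is a peak of the permutation `π ∈ S_n`.
The value of `π` at 1-based position `j` is `π ⟨j - 1, _⟩`; values are 0-based
(`π i = v` means the written value is `v + 1`). -/
def IsPeak {n : ℕ} (π : Equiv.Perm (Fin n)) (i : ℕ) : Prop :=
  ∃ h : 1 < i ∧ i < n,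
    π ⟨i - 2, by omega⟩ < π ⟨i - 1, by omega⟩ ∧ π ⟨i, by omega⟩ < π ⟨i - 1, by omega⟩

/-- `P(S;n)`: permutations in `S_n` with peak set `S`. -/
def peakSetEq (n : ℕ) (S : Finset ℕ) : Set (Equiv.Perm (Fin n)) :=
  {π | ∀ i : ℕ, IsPeak π i ↔ i ∈ S}

/-- `π` ends with an ascent to `k`: `π_{n-1} < π_n` and `π_n = k` (values written `1..n`). -/
def EndsAscentTo (n k : ℕ) (π : Equiv.Perm (Fin n)) : Prop :=
  ∃ h : 2 ≤ n, π ⟨n - 2, by omega⟩ < π ⟨n - 1, by omega⟩ ∧ ((π ⟨n - 1, by omega⟩ : ℕ) + 1 = k)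

/-- `π` ends with a descent to `k`: `π_{n-1} > π_n` and `π_n = k`. -/
def EndsDescentTo (n k : ℕ) (π : Equiv.Perm (Fin n)) : Prop :=
  ∃ h : 2 ≤ n, π ⟨n - 1, by omega⟩ < π ⟨n - 2, by omega⟩ ∧ ((π ⟨n - 1, by omega⟩ : ℕ) + 1 = k)

/-- `π` ends with an ascent: `π_{n-1} < π_n`. -/
def EndsAscent (n : ℕ) (π : Equiv.Perm (Fin n)) : Prop :=
  ∃ h : 2 ≤ n, π ⟨n - 2, by omega⟩ < π ⟨n - 1, by omega⟩

/-- `π` ends with a descent: `π_{n-1} > π_n`. -/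
def EndsDescent (n : ℕ) (π : Equiv.Perm (Fin n)) : Prop :=
  ∃ h : 2 ≤ n, π ⟨n - 1, by omega⟩ < π ⟨n - 2, by omega⟩

/-- `P(S;n)^{↗k}` -/
def ascTo (n : ℕ) (S : Finset ℕ) (k : ℕ) : Set (Equiv.Perm (Fin n)) :=
  {π ∈ peakSetEq n S | EndsAscentTo n k π}

/-- `P(S;n)_{↘k}` -/
def descTo (n : ℕ) (S : Finset ℕ) (k : ℕ) : Set (Equiv.Perm (Fin n)) :=
  {π ∈ peakSetEq n S | EndsDescentTo n k π}

/-- `overline{P(S;n)}`: elements of `P(S;n)` ending with an ascent. -/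
def overlineP (n : ℕ) (S : Finset ℕ) : Set (Equiv.Perm (Fin n)) :=
  {π ∈ peakSetEq n S | EndsAscent n π}

/-- `underline{P(S;n)}`: elements of `P(S;n)` ending with a descent. -/
def underlineP (n : ℕ) (S : Finset ℕ) : Set (Equiv.Perm (Fin n)) :=
  {π ∈ peakSetEq n S | EndsDescent n π}

/-- Type `C_n` mirrored permutations: `τ_{2n-i+1} = 2n - τ_i + 1` for all `1 ≤ i ≤ 2n`
(1-based); equivalently `τ (j.rev) = (τ j).rev` in 0-based `Fin (2*n)` terms. -/
def mirroredC (n : ℕ) : Set (Equiv.Perm (Fin (2 * n))) :=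
  {τ | ∀ j, τ j.rev = (τ j).rev}

/-- Type `D_n` mirrored permutations: mirrored, and the first `n` positions carry an even
number of values from `{n+1, …, 2n}` (i.e. 0-based values `≥ n`). -/
def mirroredD (n : ℕ) : Set (Equiv.Perm (Fin (2 * n))) :=
  {τ | (∀ j, τ j.rev = (τ j).rev) ∧
    Even ((Finset.univ.filter fun j : Fin (2 * n) => (j : ℕ) < n ∧ n ≤ (τ j : ℕ)).card)}

/-- The pattern bundle `𝒞_n(π)`: mirrored permutations whose first `n` entries have the
same relative order as `π`. -/
def bundleC (n : ℕ) (π : Equiv.Perm (Fin n)) : Set (Equiv.Perm (Fin (2 * n))) :=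
  {τ ∈ mirroredC n | ∀ i j : Fin n,
    τ (Fin.castLE (by omega) i) < τ (Fin.castLE (by omega) j) ↔ π i < π j}

/-- The pattern bundle `𝒟_n(π)`. -/
def bundleD (n : ℕ) (π : Equiv.Perm (Fin n)) : Set (Equiv.Perm (Fin (2 * n))) :=
  {τ ∈ mirroredD n | ∀ i j : Fin n,
    τ (Fin.castLE (by omega) i) < τ (Fin.castLE (by omega) j) ↔ π i < π j}

/-- Position `i` (1-based, `1 < i < n`) is a peak of the first `n` entries of `τ`. -/
def IsPeakFirst (n : ℕ) (τ : Equiv.Perm (Fin (2 * n))) (i : ℕ) : Prop :=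
  ∃ h : 1 < i ∧ i < n,
    τ ⟨i - 2, by omega⟩ < τ ⟨i - 1, by omega⟩ ∧ τ ⟨i, by omega⟩ < τ ⟨i - 1, by omega⟩

/-- `P_C(S;n)`: mirrored permutations of type `C_n` whose first `n` entries have peak set `S`. -/
def P_C (n : ℕ) (S : Finset ℕ) : Set (Equiv.Perm (Fin (2 * n))) :=
  {τ ∈ mirroredC n | ∀ i : ℕ, IsPeakFirst n τ i ↔ i ∈ S}

/-- `P_D(S;n)`. -/
def P_D (n : ℕ) (S : Finset ℕ) : Set (Equiv.Perm (Fin (2 * n))) :=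
  {τ ∈ mirroredD n | ∀ i : ℕ, IsPeakFirst n τ i ↔ i ∈ S}

/-- Position `i` (1-based, `1 < i ≤ n`) is a peak of the first `n+1` entries
`τ_1 ⋯ τ_n τ_{n+1}` of `τ` (so a peak at position `n` is possible). -/
def IsPeakHat (n : ℕ) (τ : Equiv.Perm (Fin (2 * n))) (i : ℕ) : Prop :=
  ∃ h : 1 < i ∧ i ≤ n,
    τ ⟨i - 2, by omega⟩ < τ ⟨i - 1, by omega⟩ ∧ τ ⟨i, by omega⟩ < τ ⟨i - 1, by omega⟩

/-- `hat{P}_C(S;n)`: mirrored permutations of type `C_n` such that `τ_1 ⋯ τ_n τ_{n+1}`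
has peak set `S`. -/
def hatPC (n : ℕ) (S : Finset ℕ) : Set (Equiv.Perm (Fin (2 * n))) :=
  {τ ∈ mirroredC n | ∀ i : ℕ, IsPeakHat n τ i ↔ i ∈ S}

/-- `hat{P}_D(S;n)`. -/
def hatPD (n : ℕ) (S : Finset ℕ) : Set (Equiv.Perm (Fin (2 * n))) :=
  {τ ∈ mirroredD n | ∀ i : ℕ, IsPeakHat n τ i ↔ i ∈ S}

/-- `Φ(n,k) = Σ_{i=k}^n C(n,i)`. -/
def Phi (n k : ℕ) : ℕ := ∑ i ∈ Finset.Icc k n, n.choose i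

/-- `Ψ(n,k) = 2^n - Φ(n,k)`. -/
def Psi (n k : ℕ) : ℕ := 2 ^ n - Phi n k

/-- The group `ℬ_n` of signed permutations on `n` letters. -/
def SignedPerms (n : ℕ) : Set (Fin n → ℤ) :=
  {β | (∀ i, 1 ≤ |β i| ∧ |β i| ≤ (n : ℤ)) ∧ Function.Injective fun i => |β i|}

/-- Position `i` (`1 ≤ i ≤ n - 1`) is a peak of the sequence `0, β_1, …, β_n`. -/
def IsPeakB (n : ℕ) (β : Fin n → ℤ) (i : ℕ) : Prop :=
  ∃ h : 1 ≤ i ∧ i < n,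
    (if hi : 2 ≤ i then β ⟨i - 2, by omega⟩ else 0) < β ⟨i - 1, by omega⟩ ∧
      β ⟨i, by omega⟩ < β ⟨i - 1, by omega⟩

/-- `hat{P}_B(R;n)`: signed permutations such that `0, β_1, …, β_n` has peak set `R`. -/
def hatPB (n : ℕ) (R : Finset ℕ) : Set (Fin n → ℤ) :=
  {β ∈ SignedPerms n | ∀ i : ℕ, IsPeakB n β i ↔ i ∈ R}


/-! A permutation without peaks is V-shaped: it decreases down to its minimum and increases
afterwards, so it is determined by the set of values written before the minimum. If it ends with
an ascent to `k`, all values above `k` must come before the minimum and `k` is the last entry,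
while each of the `k - 2` values `2, …, k - 1` may stand on either side of the minimum. -/

open Finset Function Order

section AscentsPersist

variable {α β : Type*} [LinearOrder α] [SuccOrder α] [IsSuccArchimedean α] [LinearOrder β]
  {f : α → β}

/-- For injective `f`, this says that `f` has no peak. -/
def AscentsPersist (f : α → β) : Prop :=
  ∀ ⦃a b c : α⦄, a ⋖ b → b ⋖ c → f a < f b → f b < f c

theorem AscentsPersist.strictMonoOn_Ici (hf : AscentsPersist f) {a : α}
    (ha : f a < f (succ a)) : StrictMonoOn f (Set.Ici a) := by
  have hsucc : ∀ x, a ≤ x → ¬IsMax x → f x < f (succ x) := by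
    intro x hx
    induction hx using Succ.rec with
    | rfl => exact fun _ => ha
    | succ x _ ih =>
      intro hmax
      have hx : ¬IsMax x := fun h => hmax (by rwa [h.succ_eq])
      exact hf (covBy_succ_of_not_isMax hx) (covBy_succ_of_not_isMax hmax) (ih hx)
  exact strictMonoOn_of_lt_succ Set.ordConnected_Ici fun x hmax hx _ => hsucc x hx hmax

variable {p : α}

theorem AscentsPersist.strictMonoOn_Ici_of_le (hf : AscentsPersist f) (hinj : Injective f)
    (hp : ∀ x, f p ≤ f x) : StrictMonoOn f (Set.Ici p) := by
  by_cases hmax : IsMax p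
  · rw [hmax.Ici_eq]
    exact Set.subsingleton_singleton.strictMonoOn f
  · exact hf.strictMonoOn_Ici <| (hp _).lt_of_ne (hinj.ne (lt_succ_of_not_isMax hmax).ne)

theorem AscentsPersist.strictAntiOn_Iic_of_le (hf : AscentsPersist f) (hinj : Injective f)
    (hp : ∀ x, f p ≤ f x) : StrictAntiOn f (Set.Iic p) := by
  refine strictAntiOn_Iic_of_succ_lt fun m hm => lt_of_not_ge fun hle => ?_
  have hasc : f m < f (succ m) :=
    hle.lt_of_ne (hinj.ne (lt_succ_of_not_isMax (not_isMax_of_lt hm)).ne)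
  exact (hf.strictMonoOn_Ici hasc Set.self_mem_Ici hm.le hm).not_ge (hp m)

end AscentsPersist

section Peaks

variable {n : ℕ} {π : Perm (Fin n)}

theorem ascentsPersist_of_mem_peakSetEq_empty (hπ : π ∈ peakSetEq n ∅) : AscentsPersist π := by
  intro a b c hab hbc hasc
  simp only [Fin.covBy_iff, Nat.covBy_iff_add_one_eq] at hab hbc
  refine lt_of_le_of_ne (le_of_not_gt fun hdesc => ?_) (π.injective.ne (by omega))
  obtain rfl : a = ⟨c - 2, (Nat.sub_le _ _).trans_lt c.isLt⟩ := Fin.ext (by simp; omega)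
  obtain rfl : b = ⟨c - 1, (Nat.sub_le _ _).trans_lt c.isLt⟩ := Fin.ext (by simp; omega)
  simpa using (hπ c).1 ⟨⟨by omega, c.isLt⟩, hasc, hdesc⟩

theorem mem_peakSetEq_empty_of_strictAntiOn_of_strictMonoOn {m : ℕ}
    (hanti : StrictAntiOn π {i | (i : ℕ) < m}) (hmono : StrictMonoOn π {i | m ≤ (i : ℕ)}) :
    π ∈ peakSetEq n ∅ := by
  intro i
  simp only [notMem_empty, iff_false]
  rintro ⟨⟨h1, h2⟩, hasc, hdesc⟩
  rcases lt_or_ge (i - 1) m with h | h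
  · exact (hanti (by simp; omega) (by simpa using h) (Fin.mk_lt_mk.2 (by omega))).asymm hasc
  · exact (hmono (by simpa using h) (by simp; omega) (Fin.mk_lt_mk.2 (by omega))).asymm hdesc

end Peaks

section VShape

variable {n : ℕ} (L : Finset (Fin n))

theorem card_compl_fin : #Lᶜ = n - #L := by
  rw [card_compl, Fintype.card_fin]

noncomputable def vShapeFun (i : Fin n) : Fin n :=
  if h : (i : ℕ) < #L then L.orderEmbOfFin rfl (Fin.rev ⟨i, h⟩)
  else Lᶜ.orderEmbOfFin (card_compl_fin L) ⟨i - #L, by omega⟩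

variable {L}

theorem vShapeFun_mem_iff (i : Fin n) : vShapeFun L i ∈ L ↔ (i : ℕ) < #L := by
  unfold vShapeFun
  split_ifs with h
  · simp [h, orderEmbOfFin_mem]
  · simpa [h] using mem_compl.1 (orderEmbOfFin_mem _ _ _)

theorem vShapeFun_injective : Injective (vShapeFun L) := by
  intro i j hij
  have hmem := vShapeFun_mem_iff (L := L) i
  rw [hij, vShapeFun_mem_iff] at hmem
  unfold vShapeFun at hij
  split_ifs at hij with hi hj hj
  · have := Fin.ext_iff.1 ((L.orderEmbOfFin rfl).injective hij)
    simp only [Fin.val_rev] at this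
    omega
  · exact absurd (hmem.mpr hi) hj
  · exact absurd (hmem.mp hj) hi
  · have := Fin.ext_iff.1 ((Lᶜ.orderEmbOfFin _).injective hij)
    simp only at this
    omega

variable (L) in
noncomputable def vShape : Perm (Fin n) :=
  Equiv.ofBijective _ (Finite.injective_iff_bijective.1 (vShapeFun_injective (L := L)))

theorem vShape_apply_of_lt {i : Fin n} (h : (i : ℕ) < #L) :
    vShape L i = L.orderEmbOfFin rfl (Fin.rev ⟨i, h⟩) :=
  dif_pos h

theorem vShape_apply_of_le {i : Fin n} (h : #L ≤ (i : ℕ)) :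
    vShape L i = Lᶜ.orderEmbOfFin (card_compl_fin L) ⟨i - #L, by omega⟩ :=
  dif_neg h.not_gt

theorem vShape_mem_iff (i : Fin n) : vShape L i ∈ L ↔ (i : ℕ) < #L :=
  vShapeFun_mem_iff i

theorem strictAntiOn_vShape : StrictAntiOn (vShape L) {i | (i : ℕ) < #L} := by
  intro i hi j hj hij
  rw [vShape_apply_of_lt hi, vShape_apply_of_lt hj]
  exact (L.orderEmbOfFin rfl).strictMono (Fin.rev_lt_rev.2 hij)

theorem strictMonoOn_vShape : StrictMonoOn (vShape L) {i | #L ≤ (i : ℕ)} := by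
  intro i hi j hj hij
  rw [vShape_apply_of_le hi, vShape_apply_of_le hj]
  exact (Lᶜ.orderEmbOfFin _).strictMono (Fin.mk_lt_mk.2 (by simp only [Set.mem_ofPred] at hi; omega))

theorem vShape_mem_peakSetEq_empty : vShape L ∈ peakSetEq n ∅ :=
  mem_peakSetEq_empty_of_strictAntiOn_of_strictMonoOn strictAntiOn_vShape strictMonoOn_vShape

theorem eq_vShape_image_Iio {π : Perm (Fin n)} {p : Fin n} (hanti : StrictAntiOn π (Set.Iio p))
    (hmono : StrictMonoOn π (Set.Ici p)) : π = vShape ((Iio p).image π) := by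
  have hcard : #((Iio p).image π) = p := by
    rw [card_image_of_injective _ π.injective, Fin.card_Iio]
  have hmem (i : Fin n) : π i ∈ (Iio p).image π ↔ i < p := by
    simp [π.injective.mem_finset_image]
  generalize (Iio p).image π = L at hcard hmem ⊢
  have hle : #L ≤ n := hcard ▸ p.isLt.le
  ext1 i
  rcases lt_or_ge i p with h | h
  · let g (x : Fin #L) : Fin n := π (Fin.castLE hle x.rev)
    have hg : g = L.orderEmbOfFin rfl := by
      refine orderEmbOfFin_unique rfl (fun x => (hmem _).2 ?_) fun x y hxy => ?_
      · simp only [Fin.lt_def, Fin.val_castLE, Fin.val_rev]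
        omega
      · refine hanti ?_ ?_ (Fin.rev_lt_rev.2 hxy)
        all_goals simp only [Set.mem_Iio, Fin.lt_def, Fin.val_castLE, Fin.val_rev]; omega
    rw [vShape_apply_of_lt (hcard ▸ h), ← hg]
    simp [g]
  · let g (x : Fin (n - #L)) : Fin n := π ⟨#L + x, by omega⟩
    have hg : g = Lᶜ.orderEmbOfFin (card_compl_fin L) := by
      refine orderEmbOfFin_unique _ (fun x => mem_compl.2 ((hmem _).not.2 ?_)) fun x y hxy => ?_
      · simp only [Fin.lt_def]
        omega
      · refine hmono ?_ ?_ (Fin.mk_lt_mk.2 (by omega))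
        all_goals simp only [Set.mem_Ici, Fin.le_def]; omega
    rw [vShape_apply_of_le (hcard ▸ h), ← hg]
    exact congrArg π (Fin.ext (by simp only; omega))

end VShape

section MinAtZero

variable {n : ℕ} [NeZero n] {L : Finset (Fin n)} {π : Perm (Fin n)}

def valuesBeforeZero (π : Perm (Fin n)) : Finset (Fin n) :=
  (Iio (π.symm 0)).image π

theorem mem_valuesBeforeZero {v : Fin n} : v ∈ valuesBeforeZero π ↔ π.symm v < π.symm 0 := by
  rw [valuesBeforeZero, ← π.apply_symm_apply v, π.injective.mem_finset_image, mem_Iio,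
    π.symm_apply_apply]

theorem eq_vShape_valuesBeforeZero (hπ : π ∈ peakSetEq n ∅) :
    π = vShape (valuesBeforeZero π) := by
  have hf := ascentsPersist_of_mem_peakSetEq_empty hπ
  have hmin (x : Fin n) : π (π.symm 0) ≤ π x := by simp
  exact eq_vShape_image_Iio
    ((hf.strictAntiOn_Iic_of_le π.injective hmin).mono Set.Iio_subset_Iic_self)
    (hf.strictMonoOn_Ici_of_le π.injective hmin)

theorem valuesBeforeZero_vShape (h0 : 0 ∉ L) : valuesBeforeZero (vShape L) = L := by
  ext v
  have hv := vShape_mem_iff (L := L) ((vShape L).symm v)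
  have h0' := (vShape_mem_iff (L := L) ((vShape L).symm 0)).not
  rw [apply_symm_apply] at hv h0'
  rw [mem_valuesBeforeZero, hv]
  refine ⟨fun hlt => lt_of_not_ge fun hle => ?_, fun hv => hv.trans_le (not_lt.1 (h0'.1 h0))⟩
  simpa using strictMonoOn_vShape (L := L) hle (le_of_not_gt (h0'.1 h0)) hlt

theorem le_vShape_last {w : Fin n} (hw : w ∉ L) :
    w ≤ vShape L ⟨n - 1, Nat.sub_one_lt (NeZero.ne n)⟩ := by
  have hq := (vShape_mem_iff (L := L) ((vShape L).symm w)).not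
  rw [apply_symm_apply, not_lt] at hq
  have hlast : (vShape L).symm w ≤ ⟨n - 1, Nat.sub_one_lt (NeZero.ne n)⟩ := by
    rw [Fin.le_def]
    simp only
    omega
  simpa using strictMonoOn_vShape.monotoneOn (hq.1 hw) ((hq.1 hw).trans hlast) hlast

end MinAtZero

section AscentTo

variable {n k : ℕ} {B : Finset ℕ}

/-- In 0-based values, the entries before `0` of a permutation in `ascTo n ∅ k` are all values
`≥ k` together with some `B ⊆ {1, …, k - 2}`. -/
def leftValues (n k : ℕ) (B : Finset ℕ) : Finset (Fin n) :=
  univ.filter fun v => (v : ℕ) ∈ B ∨ k ≤ v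

theorem mem_leftValues {v : Fin n} : v ∈ leftValues n k B ↔ (v : ℕ) ∈ B ∨ k ≤ v := by
  simp [leftValues]

theorem vShape_leftValues_mem_ascTo (hk : 2 ≤ k) (hkn : k ≤ n) (hB : B ⊆ Ico 1 (k - 1)) :
    vShape (leftValues n k B) ∈ ascTo n ∅ k := by
  have : NeZero n := ⟨by omega⟩
  set L := leftValues n k B
  have hsmall {v : Fin n} (hv : (v : ℕ) < k) (hvB : (v : ℕ) ∉ B) : v ∉ L := by
    rw [mem_leftValues, not_or, not_le]
    exact ⟨hvB, hv⟩
  have hlarge {v : Fin n} (hv : v ∉ L) : (v : ℕ) < k :=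
    lt_of_not_ge fun h => hv (mem_leftValues.2 (Or.inr h))
  have h0 : (0 : Fin n) ∉ L := hsmall (by simp; omega) fun h => by simpa using hB h
  have hk1 : (⟨k - 1, by omega⟩ : Fin n) ∉ L := hsmall (by simp; omega) fun h => by
    simpa using hB h
  have hcard : #L + 2 ≤ n := by
    have : ({0, ⟨k - 1, by omega⟩} : Finset (Fin n)) ⊆ Lᶜ := by
      simp [insert_subset_iff, h0, hk1]
    have := card_le_card this
    rw [card_pair (by simp [Fin.ext_iff]; omega), card_compl_fin] at this
    omega
  have hlast := le_antisymm
    (Nat.le_sub_one_of_lt (hlarge ((vShape_mem_iff _).not.2 (by simp; omega))))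
    (Fin.le_def.1 (le_vShape_last hk1))
  refine ⟨vShape_mem_peakSetEq_empty, by omega,
    strictMonoOn_vShape (show #L ≤ n - 2 by omega) (show #L ≤ n - 1 by omega)
      (Fin.mk_lt_mk.2 (by omega)), by omega⟩

theorem exists_vShape_leftValues_eq {π : Perm (Fin n)} (hπ : π ∈ ascTo n ∅ k) :
    ∃ B ⊆ Ico 1 (k - 1), vShape (leftValues n k B) = π := by
  obtain ⟨hpeak, hn, -, hlast⟩ := hπ
  have : NeZero n := ⟨by omega⟩
  set L := valuesBeforeZero π
  have hπL : vShape L = π := (eq_vShape_valuesBeforeZero hpeak).symm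
  have h0 : (0 : Fin n) ∉ L := by simp [L, mem_valuesBeforeZero]
  have hL : #L < n := by simpa using card_lt_univ_of_notMem h0
  have hlastL : π ⟨n - 1, by omega⟩ ∉ L := by
    rw [← hπL, vShape_mem_iff]
    simp only
    omega
  have hlarge {v : Fin n} (hv : k ≤ (v : ℕ)) : v ∈ L := by
    by_contra hvL
    have := Fin.le_def.1 (le_vShape_last hvL)
    rw [hπL] at this
    omega
  refine ⟨(L.image Fin.val).filter (· < k), fun v hv => ?_, ?_⟩
  · obtain ⟨⟨w, hwL, rfl⟩, hwk⟩ := by simpa using hv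
    have hw0 : (w : ℕ) ≠ 0 := fun h => h0 (Fin.val_eq_zero_iff.1 h ▸ hwL)
    have hwk1 : (w : ℕ) ≠ k - 1 := fun h => hlastL (by convert hwL; ext; omega)
    rw [mem_Ico]
    omega
  · rw [← hπL]
    congr 1
    ext v
    rw [mem_leftValues, mem_filter, Fin.val_injective.mem_finset_image]
    by_cases hv : k ≤ (v : ℕ)
    · simp [hv, hlarge hv]
    · simp [hv, lt_of_not_ge hv]

theorem injOn_vShape_leftValues (hk : 2 ≤ k) (hkn : k ≤ n) :
    Set.InjOn (fun B => vShape (leftValues n k B)) ↑(Ico 1 (k - 1)).powerset := by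
  have : NeZero n := ⟨by omega⟩
  have h0 {B : Finset ℕ} (hB : B ⊆ Ico 1 (k - 1)) : (0 : Fin n) ∉ leftValues n k B := by
    rw [mem_leftValues, not_or]
    exact ⟨fun h => by simpa using hB h, by simp; omega⟩
  intro B hB B' hB' h
  rw [mem_coe, mem_powerset] at hB hB'
  have hL := congrArg valuesBeforeZero h
  simp only [valuesBeforeZero_vShape (h0 hB), valuesBeforeZero_vShape (h0 hB')] at hL
  ext v
  by_cases hv : v < k - 1
  · have hmem (B : Finset ℕ) : (⟨v, by omega⟩ : Fin n) ∈ leftValues n k B ↔ v ∈ B :=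
      mem_leftValues.trans (or_iff_left (by simp only; omega))
    rw [← hmem B, ← hmem B', hL]
  · exact iff_of_false (fun h => hv (mem_Ico.1 (hB h)).2) (fun h => hv (mem_Ico.1 (hB' h)).2)

end AscentTo

theorem stmt0 (n k : ℕ) (hk : 2 ≤ k) (hkn : k ≤ n) :
    (ascTo n ∅ k).ncard = 2 ^ (k - 2) := by
  have hbij : Set.BijOn (fun B => vShape (leftValues n k B)) ↑(Ico 1 (k - 1)).powerset
      (ascTo n ∅ k) := by
    refine ⟨fun B hB => vShape_leftValues_mem_ascTo hk hkn (mem_powerset.1 hB),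
      injOn_vShape_leftValues hk hkn, fun π hπ => ?_⟩
    obtain ⟨B, hB, rfl⟩ := exists_vShape_leftValues_eq hπ
    exact ⟨B, mem_powerset.2 hB, rfl⟩
  rw [← hbij.image_eq, hbij.injOn.ncard_image, Set.ncard_coe_finset, card_powerset,
    Nat.card_Ico, Nat.sub_sub]
end

section
/- For every integer n ≥ 2, exactly one permutation in S_n with empty peak set ends with a descent, i.e. |underline{P(∅;n)}| = 1, and the number of permutations in S_n with empty peak set ending with an ascent is |overline{P(∅;n)}| = 2^{n−1} − 1. -/
open Equiv

/-!
A peak-free permutation decreases until it reaches its minimum and increases afterwards, so it is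
determined by the set `T` of values to the right of the minimum, and every set of nonzero values
occurs: `T ↦ vPerm T` is a bijection onto the peak-free permutations, which are therefore
`2 ^ (n - 1)` in number. Such a permutation ends with a descent exactly when its minimum comes
last, i.e. when `T = ∅`; all the others end with an ascent.
-/

open Finset

section Fin

variable {n : ℕ} {α : Type*} [Preorder α] {f : Fin n → α} {s : Set (Fin n)}

lemma Fin.strictMonoOn_of_lt_of_val_add_one (hs : s.OrdConnected)
    (h : ∀ a ∈ s, ∀ b ∈ s, (a : ℕ) + 1 = b → f a < f b) : StrictMonoOn f s :=
  strictMonoOn_of_lt_succ hs fun a ha has hsa => h a has _ hsa <|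
    Nat.covBy_iff_add_one_eq.mp <| Fin.covBy_iff.mp <| Order.covBy_succ_of_not_isMax ha

lemma Fin.strictAntiOn_of_lt_of_val_add_one (hs : s.OrdConnected)
    (h : ∀ a ∈ s, ∀ b ∈ s, (a : ℕ) + 1 = b → f b < f a) : StrictAntiOn f s :=
  strictAntiOn_of_succ_lt hs fun a ha has hsa => h a has _ hsa <|
    Nat.covBy_iff_add_one_eq.mp <| Fin.covBy_iff.mp <| Order.covBy_succ_of_not_isMax ha

end Fin

section PeakFree

variable {n : ℕ} {π : Perm (Fin n)}

lemma isPeak_of_lt_of_lt {a b c : Fin n} (hab : (a : ℕ) + 1 = b) (hbc : (b : ℕ) + 1 = c)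
    (h₁ : π a < π b) (h₂ : π c < π b) : IsPeak π ((b : ℕ) + 1) := by
  obtain ⟨a, ha⟩ := a
  obtain ⟨b, hb⟩ := b
  obtain ⟨c, hc⟩ := c
  dsimp only at hab hbc
  subst hab hbc
  exact ⟨⟨by simp, hc⟩, h₁, h₂⟩

lemma lt_of_lt_of_forall_not_isPeak (hπ : ∀ i, ¬ IsPeak π i) {a b c : Fin n}
    (hab : (a : ℕ) + 1 = b) (hbc : (b : ℕ) + 1 = c) (h : π a < π b) : π b < π c :=
  (π.injective.ne (Fin.ne_of_val_ne (by omega))).lt_or_gt.resolve_right fun h' =>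
    hπ _ (isPeak_of_lt_of_lt hab hbc h h')

lemma lt_of_lt_of_le_of_forall_not_isPeak (hπ : ∀ i, ¬ IsPeak π i) {a b a' b' : Fin n}
    (hab : (a : ℕ) + 1 = b) (hab' : (a' : ℕ) + 1 = b') (ha : a ≤ a') (h : π a < π b) :
    π a' < π b' := by
  obtain ⟨k, hk⟩ := Nat.exists_eq_add_of_le (Fin.le_def.mp ha)
  induction k generalizing a' b' with
  | zero =>
    obtain rfl : a' = a := Fin.ext hk
    obtain rfl : b' = b := Fin.ext (by omega)
    exact h
  | succ k ih =>
    have hk' : (a : ℕ) + k < n := by omega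
    exact lt_of_lt_of_forall_not_isPeak hπ (a := ⟨a + k, hk'⟩) (by simp; omega) hab'
      (ih (a' := ⟨a + k, hk'⟩) (by simp; omega) (Fin.le_def.mpr (by simp)) rfl)

lemma endsAscent_iff_not_endsDescent (hn : 2 ≤ n) : EndsAscent n π ↔ ¬ EndsDescent n π :=
  ⟨fun ⟨_, h⟩ ⟨_, h'⟩ => h.asymm h', fun h =>
    ⟨hn, lt_of_le_of_ne (not_lt.mp fun h' => h ⟨hn, h'⟩)
      (π.injective.ne (Fin.ne_of_val_ne (by simp; omega)))⟩⟩

variable [NeZero n]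

lemma strictMonoOn_Ici_symm_zero (hπ : ∀ i, ¬ IsPeak π i) :
    StrictMonoOn π (Set.Ici (π.symm 0)) := by
  refine Fin.strictMonoOn_of_lt_of_val_add_one Set.ordConnected_Ici fun a ha b _ hab => ?_
  have hm : (π.symm 0 : ℕ) + 1 < n := by have := Fin.le_def.mp ha; omega
  refine lt_of_lt_of_le_of_forall_not_isPeak hπ (b := ⟨_, hm⟩) rfl hab ha ?_
  rw [apply_symm_apply, Fin.pos_iff_ne_zero]
  exact fun h => Fin.ne_of_val_ne (by simp) (π.symm_apply_eq.mpr h.symm)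

lemma strictAntiOn_Iic_symm_zero (hπ : ∀ i, ¬ IsPeak π i) :
    StrictAntiOn π (Set.Iic (π.symm 0)) := by
  refine Fin.strictAntiOn_of_lt_of_val_add_one Set.ordConnected_Iic fun a _ b hb hab => ?_
  refine (π.injective.ne (show a ≠ b from Fin.ne_of_val_ne (by omega))).lt_or_gt.resolve_left
    fun h => ?_
  -- the ascent at `a` would propagate to an ascent into the minimum
  have hb' := Fin.le_def.mp hb
  have := lt_of_lt_of_le_of_forall_not_isPeak hπ hab (a' := ⟨(π.symm 0 : ℕ) - 1, by omega⟩)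
    (b' := π.symm 0) (by simp; omega) (Fin.le_def.mpr (by simp; omega)) h
  simp at this

end PeakFree

section VShaped

variable {n : ℕ}

def numAbove (s : Finset (Fin n)) (v : Fin n) : Fin n :=
  ⟨#(s.filter (v < ·)), by simpa using card_lt_univ_of_notMem (x := v) (by simp)⟩

lemma strictAntiOn_numAbove (s : Finset (Fin n)) : StrictAntiOn (numAbove s) s := by
  intro v _ w hw hvw
  refine Fin.lt_def.mpr (card_lt_card ((ssubset_iff_of_subset fun x hx => ?_).mpr ⟨w, ?_, ?_⟩))
  · simp only [mem_filter] at hx ⊢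
    exact ⟨hx.1, hvw.trans hx.2⟩
  · simpa [mem_filter] using ⟨hw, hvw⟩
  · simp

lemma numAbove_lt_card {s : Finset (Fin n)} {v : Fin n} (hv : v ∈ s) :
    (numAbove s v : ℕ) < #s :=
  card_lt_card (filter_ssubset.mpr ⟨v, hv, lt_irrefl v⟩)

def vPos (T : Finset (Fin n)) (v : Fin n) : Fin n :=
  if v ∈ T then (numAbove T v).rev else numAbove Tᶜ v

lemma le_vPos_iff {T : Finset (Fin n)} {v : Fin n} : n - #T ≤ vPos T v ↔ v ∈ T := by
  unfold vPos
  split_ifs with hv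
  · have := numAbove_lt_card hv
    simp only [Fin.val_rev, hv, iff_true]
    omega
  · have := numAbove_lt_card (mem_compl.mpr hv)
    rw [card_compl, Fintype.card_fin] at this
    simp only [hv, iff_false]
    omega

lemma strictMonoOn_vPos (T : Finset (Fin n)) : StrictMonoOn (vPos T) T :=
  fun v hv w hw hvw => by
  simp only [vPos, if_pos (mem_coe.mp hv), if_pos (mem_coe.mp hw)]
  exact Fin.rev_lt_rev.mpr (strictAntiOn_numAbove T hv hw hvw)

lemma strictAntiOn_vPos (T : Finset (Fin n)) : StrictAntiOn (vPos T) ↑Tᶜ :=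
  fun v hv w hw hvw => by
  simp only [vPos, if_neg (mem_compl.mp (mem_coe.mp hv)), if_neg (mem_compl.mp (mem_coe.mp hw))]
  exact strictAntiOn_numAbove Tᶜ hv hw hvw

lemma vPos_injective (T : Finset (Fin n)) : Function.Injective (vPos T) := by
  intro v w h
  have hv := le_vPos_iff (T := T) (v := v)
  have hw := le_vPos_iff (T := T) (v := w)
  rw [h] at hv
  by_cases hwT : w ∈ T
  · exact (strictMonoOn_vPos T).injOn ((hv.symm.trans hw).mpr hwT) hwT h
  · refine (strictAntiOn_vPos T).injOn ?_ (mem_compl.mpr hwT) h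
    exact mem_compl.mpr fun hvT => hwT (hw.mp (hv.mpr hvT))

/-- The V-shaped permutation listing the values outside `T` in decreasing order, then those of
`T` in increasing order; `vPos T` is its inverse. -/
noncomputable def vPerm (T : Finset (Fin n)) : Perm (Fin n) :=
  (Equiv.ofBijective (vPos T) (vPos_injective T).bijective_of_finite).symm

@[simp]
lemma vPerm_symm_apply (T : Finset (Fin n)) (v : Fin n) : (vPerm T).symm v = vPos T v := rfl

@[simp]
lemma vPos_vPerm (T : Finset (Fin n)) (p : Fin n) : vPos T (vPerm T p) = p :=
  (vPerm T).symm_apply_apply p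

lemma vPerm_lt_vPerm_of_mem {T : Finset (Fin n)} {p q : Fin n} (hp : vPerm T p ∈ T)
    (hpq : p < q) : vPerm T p < vPerm T q := by
  have hq : vPerm T q ∈ T := le_vPos_iff.mp ((le_vPos_iff.mpr hp).trans (by simpa using hpq.le))
  exact ((strictMonoOn_vPos T).lt_iff_lt hp hq).mp (by simpa using hpq)

lemma vPerm_lt_vPerm_of_notMem {T : Finset (Fin n)} {p q : Fin n} (hq : vPerm T q ∉ T)
    (hpq : p < q) : vPerm T q < vPerm T p := by
  have hp : vPerm T p ∉ T := fun hp => hq (le_vPos_iff.mp ((le_vPos_iff.mpr hp).trans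
    (by simpa using hpq.le)))
  exact ((strictAntiOn_vPos T).lt_iff_gt (mem_compl.mpr hp) (mem_compl.mpr hq)).mp
    (by simpa using hpq)

lemma not_isPeak_vPerm (T : Finset (Fin n)) (i : ℕ) : ¬ IsPeak (vPerm T) i := by
  rintro ⟨⟨h1, h2⟩, hab, hcb⟩
  by_cases hb : vPerm T ⟨i - 1, by omega⟩ ∈ T
  · exact (vPerm_lt_vPerm_of_mem hb (Fin.lt_def.mpr (by simp; omega))).asymm hcb
  · exact (vPerm_lt_vPerm_of_notMem hb (Fin.lt_def.mpr (by simp; omega))).asymm hab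

variable [NeZero n]

def rightOfMin (π : Perm (Fin n)) : Finset (Fin n) :=
  univ.filter fun v => π.symm 0 < π.symm v

lemma mem_rightOfMin {π : Perm (Fin n)} {v : Fin n} :
    v ∈ rightOfMin π ↔ π.symm 0 < π.symm v := by
  simp [rightOfMin]

lemma zero_notMem_rightOfMin (π : Perm (Fin n)) : 0 ∉ rightOfMin π := by
  simp [mem_rightOfMin]

lemma rightOfMin_vPerm {T : Finset (Fin n)} (h0 : 0 ∉ T) : rightOfMin (vPerm T) = T := by
  ext v
  rw [mem_rightOfMin, vPerm_symm_apply, vPerm_symm_apply]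
  constructor
  · intro h
    by_contra hv
    have hv0 : 0 < v := Fin.pos_iff_ne_zero.mpr (by rintro rfl; exact lt_irrefl _ h)
    exact ((strictAntiOn_vPos T) (mem_compl.mpr h0) (mem_compl.mpr hv) hv0).asymm h
  · intro hv
    exact (not_le.mp (mt le_vPos_iff.mp h0)).trans_le (le_vPos_iff.mpr hv)

section
variable {π : Perm (Fin n)}

lemma filter_rightOfMin_lt (hπ : ∀ i, ¬ IsPeak π i) {p : Fin n} (hp : π.symm 0 < p) :
    (rightOfMin π).filter (π p < ·) = (Ioi p).map π.toEmbedding := by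
  ext w
  obtain ⟨q, rfl⟩ := π.surjective w
  have hmono := strictMonoOn_Ici_symm_zero hπ
  simp only [mem_filter, mem_rightOfMin, mem_map_equiv, symm_apply_apply, mem_Ioi]
  exact ⟨fun ⟨hq, h⟩ => (hmono.lt_iff_lt hp.le hq.le).mp h,
    fun h => ⟨hp.trans h, (hmono.lt_iff_lt hp.le (hp.trans h).le).mpr h⟩⟩

lemma filter_compl_rightOfMin_lt (hπ : ∀ i, ¬ IsPeak π i) {p : Fin n} (hp : p ≤ π.symm 0) :
    (rightOfMin π)ᶜ.filter (π p < ·) = (Iio p).map π.toEmbedding := by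
  ext w
  obtain ⟨q, rfl⟩ := π.surjective w
  have hanti := strictAntiOn_Iic_symm_zero hπ
  simp only [mem_filter, mem_compl, mem_rightOfMin, not_lt, mem_map_equiv, symm_apply_apply,
    mem_Iio]
  exact ⟨fun ⟨hq, h⟩ => (hanti.lt_iff_gt hp hq).mp h,
    fun h => ⟨h.le.trans hp, (hanti.lt_iff_gt hp (h.le.trans hp)).mpr h⟩⟩

lemma vPerm_rightOfMin (hπ : ∀ i, ¬ IsPeak π i) : vPerm (rightOfMin π) = π := by
  refine Equiv.symm_bijective.injective (Equiv.ext fun v => ?_)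
  obtain ⟨p, rfl⟩ := π.surjective v
  rw [vPerm_symm_apply, symm_apply_apply, vPos]
  split_ifs with hv
  · rw [mem_rightOfMin, symm_apply_apply] at hv
    ext
    simp only [numAbove, Fin.val_rev, filter_rightOfMin_lt hπ hv, card_map, Fin.card_Ioi]
    omega
  · rw [mem_rightOfMin, symm_apply_apply, not_lt] at hv
    ext
    simp [numAbove, filter_compl_rightOfMin_lt hπ hv]

lemma endsDescent_iff_rightOfMin_eq_empty (hn : 2 ≤ n) (hπ : ∀ i, ¬ IsPeak π i) :
    EndsDescent n π ↔ rightOfMin π = ∅ := by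
  constructor
  · rintro ⟨_, hdesc⟩
    by_contra hne
    obtain ⟨v, hv⟩ := nonempty_of_ne_empty hne
    have hm : (π.symm 0 : ℕ) ≤ n - 2 := by
      have := (π.symm v).isLt
      have := Fin.lt_def.mp (mem_rightOfMin.mp hv)
      omega
    exact hdesc.asymm (strictMonoOn_Ici_symm_zero hπ (Fin.le_def.mpr hm)
      (Fin.le_def.mpr (by simp; omega)) (Fin.lt_def.mpr (by simp; omega)))
  · intro h
    have hlast : π.symm 0 = ⟨n - 1, by omega⟩ := by
      refine (lt_or_eq_of_le (Fin.le_def.mpr (by simp; omega))).resolve_left fun hlt => ?_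
      have : π ⟨n - 1, by omega⟩ ∈ rightOfMin π := mem_rightOfMin.mpr (by simpa using hlt)
      simp [h] at this
    have h0 : π ⟨n - 1, by omega⟩ = 0 := (π.symm_apply_eq.mp hlast).symm
    refine ⟨hn, h0 ▸ Fin.pos_iff_ne_zero.mpr fun h2 => ?_⟩
    exact absurd (congrArg Fin.val (π.injective (h2.trans h0.symm))) (by simp; omega)

end

end VShaped

lemma Finset.ncard_setOf_notMem {α : Type*} [Fintype α] [DecidableEq α] (a : α) :
    {s : Finset α | a ∉ s}.ncard = 2 ^ (Fintype.card α - 1) := by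
  have : {s : Finset α | a ∉ s} = ↑(univ.erase a).powerset := by
    ext s
    simp only [Set.mem_ofPred_eq, coe_powerset, Set.mem_preimage, Set.mem_powerset_iff, coe_subset,
      subset_erase, subset_univ, true_and]
  rw [this, Set.ncard_coe_finset, card_powerset, card_erase_of_mem (mem_univ a), card_univ]

section Count

variable {n : ℕ}

lemma mem_peakSetEq_empty {π : Perm (Fin n)} :
    π ∈ peakSetEq n ∅ ↔ ∀ i, ¬ IsPeak π i := by
  simp [peakSetEq]

lemma overlineP_eq_diff (hn : 2 ≤ n) (S : Finset ℕ) :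
    overlineP n S = peakSetEq n S \ underlineP n S := by
  ext π
  simp only [overlineP, underlineP, Set.mem_sdiff, Set.mem_ofPred_eq,
    endsAscent_iff_not_endsDescent hn]
  tauto

variable [NeZero n]

lemma bijOn_vPerm : Set.BijOn vPerm {T : Finset (Fin n) | 0 ∉ T} (peakSetEq n ∅) :=
  Set.InvOn.bijOn
    ⟨fun _ hT => rightOfMin_vPerm hT,
      fun _ hπ => vPerm_rightOfMin (mem_peakSetEq_empty.mp hπ)⟩
    (fun T _ => mem_peakSetEq_empty.mpr (not_isPeak_vPerm T))
    (fun π _ => zero_notMem_rightOfMin π)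

lemma ncard_peakSetEq_empty : (peakSetEq n ∅).ncard = 2 ^ (n - 1) := by
  rw [← bijOn_vPerm.ncard_eq, Finset.ncard_setOf_notMem, Fintype.card_fin]

lemma underlineP_empty (hn : 2 ≤ n) : underlineP n ∅ = {vPerm ∅} := by
  ext π
  constructor
  · rintro ⟨hp, hdesc⟩
    have hπ := mem_peakSetEq_empty.mp hp
    rw [Set.mem_singleton_iff, ← vPerm_rightOfMin hπ,
      (endsDescent_iff_rightOfMin_eq_empty hn hπ).mp hdesc]
  · rintro rfl
    exact ⟨mem_peakSetEq_empty.mpr (not_isPeak_vPerm ∅),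
      (endsDescent_iff_rightOfMin_eq_empty hn (not_isPeak_vPerm ∅)).mpr
        (rightOfMin_vPerm (notMem_empty 0))⟩

end Count

theorem stmt2 (n : ℕ) (hn : 2 ≤ n) :
    (underlineP n ∅).ncard = 1 ∧ (overlineP n ∅).ncard = 2 ^ (n - 1) - 1 := by
  have : NeZero n := ⟨by omega⟩
  have hunder : (underlineP n ∅).ncard = 1 := by
    rw [underlineP_empty hn, Set.ncard_singleton]
  refine ⟨hunder, ?_⟩
  rw [overlineP_eq_diff hn, Set.ncard_sdiff (fun _ h => h.1), hunder, ncard_peakSetEq_empty]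
end

section
/- Let S ⊆ {1,…,n−1} be a nonempty admissible set, let m = max(S), and set S₁ = S∖{m} and S₂ = S₁ ∪ {m−1}. Then |overline{P(S;n)}| = C(n, m−1)·(2^{n−m} − 1)·|P(S₁;m−1)| − |overline{P(S₁;n)}| − |overline{P(S₂;n)}|, where C(a,b) denotes the binomial coefficient. -/
open Equiv

/-!
Write `p = m - 1`. Peaks are never adjacent, so `p ∉ S`, whence `S = S₁ ∪ {p + 1}` and
`S₂ = S₁ ∪ {p}`. Count in two ways the permutations in `S_n` that end with an ascent, whose peaks
below `p` form `S₁` and that have no peak beyond `p + 1`.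

Since `p` and `p + 1` are not both peaks, these permutations form the disjoint union of
`overline{P(S₁;n)}`, `overline{P(S₂;n)}` and `overline{P(S;n)}`.

On the other hand, such a permutation amounts to the set of its first `p` values, the pattern of
its prefix, an arbitrary element of `P(S₁;p)`, and the pattern of its suffix, a peak-free
permutation of `n - p` letters ending with an ascent. A peak-free permutation decreases down to its
minimum and increases afterwards, so it is determined by the set of values preceding the minimum;
ending with an ascent excludes only the decreasing one, which leaves `2^(n-m) - 1` suffixes.
-/

open Equiv Finset

namespace PeakSet

def peakSet {n : ℕ} (π : Perm (Fin n)) : Set ℕ := {i | IsPeak π i}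

lemma mem_peakSetEq {n : ℕ} {π : Perm (Fin n)} {S : Finset ℕ} :
    π ∈ peakSetEq n S ↔ peakSet π = S := by
  simp [peakSetEq, peakSet, Set.ext_iff]

lemma mem_overlineP {n : ℕ} {π : Perm (Fin n)} {S : Finset ℕ} :
    π ∈ overlineP n S ↔ peakSet π = S ∧ EndsAscent n π := by
  rw [overlineP, Set.mem_sep_iff, mem_peakSetEq]

lemma mem_overlineP_empty {n : ℕ} {π : Perm (Fin n)} :
    π ∈ overlineP n ∅ ↔ (∀ i, ¬ IsPeak π i) ∧ EndsAscent n π := by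
  simp [mem_overlineP, peakSet, Set.eq_empty_iff_forall_notMem]

lemma disjoint_overlineP {n : ℕ} {S T : Finset ℕ} (h : S ≠ T) :
    Disjoint (overlineP n S) (overlineP n T) :=
  Set.disjoint_left.mpr fun _ hS hT =>
    h (coe_injective ((mem_overlineP.mp hS).1.symm.trans (mem_overlineP.mp hT).1))

lemma not_isPeak_add_one {n : ℕ} {π : Perm (Fin n)} {i : ℕ} (h : IsPeak π i) :
    ¬ IsPeak π (i + 1) :=
  fun ⟨_, hab, _⟩ => h.2.2.asymm hab

lemma lt_max'_sub_one_of_mem_erase {n : ℕ} {S : Finset ℕ} (hS : S.Nonempty)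
    (hadm : (peakSetEq n S).Nonempty) {i : ℕ} (hi : i ∈ S.erase (S.max' hS)) :
    i < S.max' hS - 1 := by
  obtain ⟨π, hπ⟩ := hadm
  rw [mem_erase] at hi
  have hle := S.le_max' i hi.2
  have hne : i ≠ S.max' hS - 1 := by
    intro h
    refine not_isPeak_add_one ((hπ i).mpr hi.2) ?_
    rw [h, Nat.sub_add_cancel (by omega)]
    exact (hπ _).mpr (S.max'_mem hS)
  omega

lemma exists_isPeak_of_lt_of_gt {n : ℕ} (π : Perm (Fin n)) {a b c : Fin n} (hab : a < b)
    (hbc : b < c) (ha : π a < π b) (hc : π c < π b) : ∃ i, IsPeak π i := by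
  have hb : b ∈ Icc a c := mem_Icc.mpr ⟨hab.le, hbc.le⟩
  obtain ⟨q, hq, hmax⟩ := (Icc a c).exists_max_image π ⟨b, hb⟩
  have hqa : a ≠ q := by rintro rfl; exact (hmax b hb).not_gt ha
  have hqc : c ≠ q := by rintro rfl; exact (hmax b hb).not_gt hc
  have lt_max (j : Fin n) (hj : j ∈ Icc a c) (hjq : j ≠ q) : π j < π q :=
    lt_of_le_of_ne (hmax j hj) (π.injective.ne hjq)
  rw [mem_Icc, Fin.le_def, Fin.le_def] at hq
  rw [Ne, Fin.ext_iff] at hqa hqc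
  -- `IsPeak` numbers positions from 1, so the maximum at `q` is the peak `q + 1`
  refine ⟨q + 1, ⟨by omega, by omega⟩, lt_max _ ?_ ?_, lt_max _ ?_ ?_⟩ <;>
    simp [Fin.ext_iff, Fin.le_def] <;> omega

lemma card_compl_of_card_eq {n p : ℕ} {V : Finset (Fin n)} (hV : V.card = p) :
    Vᶜ.card = n - p := by
  simp [card_compl, hV]

lemma le_of_card_eq {n p : ℕ} {V : Finset (Fin n)} (hV : V.card = p) : p ≤ n :=
  hV ▸ (card_le_univ V).trans_eq (Fintype.card_fin n)

section Splice

variable {n p : ℕ} (V : Finset (Fin n)) (hV : V.card = p)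
  (σ : Perm (Fin p)) (ρ : Perm (Fin (n - p)))

/-- Positions `< p` carry the values of `V` in the relative order of `σ`, the other positions
the values of `Vᶜ` in the relative order of `ρ`. -/
def spliceFun : Fin n → Fin n := fun i =>
  if h : (i : ℕ) < p then V.orderEmbOfFin hV (σ ⟨i, h⟩)
  else Vᶜ.orderEmbOfFin (card_compl_of_card_eq hV) (ρ ⟨i - p, by omega⟩)

lemma spliceFun_injective : Function.Injective (spliceFun V hV σ ρ) := by
  have hV' := card_compl_of_card_eq hV
  have mem := V.orderEmbOfFin_mem hV
  have mem' := Vᶜ.orderEmbOfFin_mem hV'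
  intro i j hij
  unfold spliceFun at hij
  split_ifs at hij with hi hj hj
  · simpa [Fin.ext_iff] using hij
  · exact absurd (hij ▸ mem _) (mem_compl.mp (mem' _))
  · exact absurd (hij ▸ mem _) (mem_compl.mp (mem' _))
  · simp only [EmbeddingLike.apply_eq_iff_eq, Fin.mk.injEq] at hij
    exact Fin.ext (by omega)

noncomputable def splice : Perm (Fin n) :=
  .ofBijective _ (Finite.injective_iff_bijective.mp (spliceFun_injective V hV σ ρ))

lemma splice_apply_of_lt (i : Fin n) (h : (i : ℕ) < p) :
    splice V hV σ ρ i = V.orderEmbOfFin hV (σ ⟨i, h⟩) := dif_pos h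

lemma splice_apply_of_le (i : Fin n) (h : p ≤ i) :
    splice V hV σ ρ i =
      Vᶜ.orderEmbOfFin (card_compl_of_card_eq hV) (ρ ⟨i - p, by omega⟩) :=
  dif_neg (by omega)

lemma mem_iff_exists_splice_apply (v : Fin n) :
    v ∈ V ↔ ∃ i : Fin n, (i : ℕ) < p ∧ splice V hV σ ρ i = v := by
  have hpn := le_of_card_eq hV
  constructor
  · intro hv
    obtain ⟨j, rfl⟩ : v ∈ Set.range (V.orderEmbOfFin hV) := by
      rwa [range_orderEmbOfFin]
    refine ⟨⟨σ.symm j, by omega⟩, (σ.symm j).isLt, ?_⟩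
    rw [splice_apply_of_lt V hV σ ρ ⟨σ.symm j, by omega⟩ (σ.symm j).isLt]
    simp
  · rintro ⟨i, hi, rfl⟩
    rw [splice_apply_of_lt _ _ _ _ _ hi]
    exact orderEmbOfFin_mem _ _ _

lemma splice_lt_splice_iff_of_lt {a b : ℕ} (ha : a < p) (hb : b < p) (ha' : a < n)
    (hb' : b < n) :
    splice V hV σ ρ ⟨a, ha'⟩ < splice V hV σ ρ ⟨b, hb'⟩ ↔ σ ⟨a, ha⟩ < σ ⟨b, hb⟩ := by
  rw [splice_apply_of_lt _ _ _ _ _ ha, splice_apply_of_lt _ _ _ _ _ hb]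
  exact (V.orderEmbOfFin hV).lt_iff_lt

lemma splice_lt_splice_iff_of_le {a b : ℕ} (ha : p ≤ a) (hb : p ≤ b) (ha' : a < n)
    (hb' : b < n) :
    splice V hV σ ρ ⟨a, ha'⟩ < splice V hV σ ρ ⟨b, hb'⟩ ↔
      ρ ⟨a - p, by omega⟩ < ρ ⟨b - p, by omega⟩ := by
  rw [splice_apply_of_le _ _ _ _ _ ha, splice_apply_of_le _ _ _ _ _ hb]
  exact (Vᶜ.orderEmbOfFin _).lt_iff_lt

lemma isPeak_splice_iff_left {i : ℕ} (hi : i < p) :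
    IsPeak (splice V hV σ ρ) i ↔ IsPeak σ i := by
  have hpn := le_of_card_eq hV
  have lt_iff {a b : ℕ} (ha : a < p) (hb : b < p) (ha' : a < n) (hb' : b < n) :=
    splice_lt_splice_iff_of_lt V hV σ ρ ha hb ha' hb'
  constructor <;> rintro ⟨⟨h1, h2⟩, hab, hcb⟩
  · exact ⟨⟨h1, hi⟩, (lt_iff (by omega) (by omega) _ _).mp hab,
      (lt_iff (by omega) (by omega) _ _).mp hcb⟩
  · exact ⟨⟨h1, by omega⟩, (lt_iff (by omega) (by omega) _ _).mpr hab,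
      (lt_iff (by omega) (by omega) _ _).mpr hcb⟩

lemma isPeak_splice_iff_right {i : ℕ} (hi : p + 1 < i) :
    IsPeak (splice V hV σ ρ) i ↔ IsPeak ρ (i - p) := by
  have lt_iff {a b : ℕ} (ha : p ≤ a) (hb : p ≤ b) (ha' : a < n) (hb' : b < n) :=
    splice_lt_splice_iff_of_le V hV σ ρ ha hb ha' hb'
  constructor <;> rintro ⟨⟨h1, h2⟩, hab, hcb⟩
  · refine ⟨⟨by omega, by omega⟩, ?_, ?_⟩
    · convert (lt_iff (by omega) (by omega) _ _).mp hab using 3 <;> omega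
    · convert (lt_iff (by omega) (by omega) _ _).mp hcb using 3; omega
  · refine ⟨⟨by omega, by omega⟩, ?_, ?_⟩
    · exact (lt_iff (a := i - 2) (b := i - 1) (by omega) (by omega) _ _).mpr
        (by convert hab using 3 <;> omega)
    · exact (lt_iff (a := i) (b := i - 1) (by omega) (by omega) _ _).mpr
        (by convert hcb using 3; omega)

lemma endsAscent_splice_iff (hpn : p + 2 ≤ n) :
    EndsAscent n (splice V hV σ ρ) ↔ EndsAscent (n - p) ρ := by
  rw [EndsAscent, EndsAscent, exists_prop_of_true (by omega), exists_prop_of_true (by omega),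
    splice_lt_splice_iff_of_le V hV σ ρ (by omega) (by omega)]
  constructor <;> intro h <;> convert h using 3 <;> omega

end Splice

noncomputable def spliceMap (n p : ℕ) :
    {V : Finset (Fin n) // V.card = p} × Perm (Fin p) × Perm (Fin (n - p)) → Perm (Fin n) :=
  fun t => splice t.1.1 t.1.2 t.2.1 t.2.2

lemma spliceMap_injective (n p : ℕ) : Function.Injective (spliceMap n p) := by
  rintro ⟨⟨V, hV⟩, σ, ρ⟩ ⟨⟨V', hV'⟩, σ', ρ'⟩ h
  simp only [spliceMap] at h
  have hpn := le_of_card_eq hV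
  obtain rfl : V = V' := by
    ext v
    rw [mem_iff_exists_splice_apply V hV σ ρ, mem_iff_exists_splice_apply V' hV' σ' ρ', h]
  obtain rfl : σ = σ' := by
    refine Equiv.ext fun i => ?_
    have := DFunLike.congr_fun h ⟨i, by omega⟩
    rw [splice_apply_of_lt V hV σ ρ _ i.isLt, splice_apply_of_lt V hV' σ' ρ' _ i.isLt] at this
    simpa using this
  obtain rfl : ρ = ρ' := by
    refine Equiv.ext fun j => ?_
    have := DFunLike.congr_fun h ⟨p + j, by omega⟩
    rw [splice_apply_of_le _ _ _ _ _ (Nat.le_add_right p j),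
      splice_apply_of_le _ _ _ _ _ (Nat.le_add_right p j)] at this
    simpa using this
  rfl

lemma spliceMap_bijective {n p : ℕ} (hpn : p ≤ n) : Function.Bijective (spliceMap n p) := by
  rw [Fintype.bijective_iff_injective_and_card]
  refine ⟨spliceMap_injective n p, ?_⟩
  simp only [Fintype.card_prod, Fintype.card_finset_len, Fintype.card_perm, Fintype.card_fin]
  rw [← mul_assoc, Nat.choose_mul_factorial_mul_factorial hpn]

section Valley

variable {l : ℕ}

lemma apply_lt_apply_of_le_symm_zero [NeZero l] {ρ : Perm (Fin l)} (hρ : ∀ i, ¬ IsPeak ρ i)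
    {a b : Fin l} (hab : a < b) (hb : b ≤ ρ.symm 0) : ρ b < ρ a := by
  by_contra! h
  have hlt := lt_of_le_of_ne h (ρ.injective.ne hab.ne)
  have hbc : b < ρ.symm 0 := lt_of_le_of_ne hb (by rintro rfl; simp at hlt)
  have hpos : ρ (ρ.symm 0) < ρ b := by
    rw [apply_symm_apply, Fin.pos_iff_ne_zero']
    exact fun h => hbc.ne (ρ.eq_symm_apply.mpr h)
  obtain ⟨i, hi⟩ := exists_isPeak_of_lt_of_gt ρ hab hbc hlt hpos
  exact hρ i hi

lemma apply_lt_apply_of_symm_zero_le [NeZero l] {ρ : Perm (Fin l)} (hρ : ∀ i, ¬ IsPeak ρ i)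
    {a b : Fin l} (ha : ρ.symm 0 ≤ a) (hab : a < b) : ρ a < ρ b := by
  by_contra! h
  have hlt := lt_of_le_of_ne h (ρ.injective.ne hab.ne')
  have hca : ρ.symm 0 < a := lt_of_le_of_ne ha (by rintro rfl; simp at hlt)
  have hpos : ρ (ρ.symm 0) < ρ a := by
    rw [apply_symm_apply, Fin.pos_iff_ne_zero']
    exact fun h => hca.ne' (ρ.eq_symm_apply.mpr h)
  obtain ⟨i, hi⟩ := exists_isPeak_of_lt_of_gt ρ hca hab hpos hlt
  exact hρ i hi

noncomputable def vShape (L : Finset (Fin l)) : Perm (Fin l) := splice L rfl Fin.revPerm 1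

lemma vShape_mem_overlineP_empty {L : Finset (Fin l)} (hL : L.card + 2 ≤ l) :
    vShape L ∈ overlineP l ∅ := by
  refine mem_overlineP_empty.mpr ⟨fun i ⟨⟨h1, h2⟩, hab, hcb⟩ => ?_, ?_⟩
  · rcases lt_or_ge (i - 1) L.card with hi | hi
    · rw [vShape, splice_lt_splice_iff_of_lt _ _ _ _ (by omega) hi] at hab
      simp [Fin.lt_def] at hab
      omega
    · rw [vShape, splice_lt_splice_iff_of_le _ _ _ _ (by omega) hi] at hcb
      simp [Fin.lt_def] at hcb
      omega
  · rw [vShape, endsAscent_splice_iff _ _ _ _ hL]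
    exact ⟨by omega, by simp [Fin.lt_def]; omega⟩

lemma vShape_symm_zero [NeZero l] {L : Finset (Fin l)} (hL : 0 ∉ L) :
    ((vShape L).symm 0 : ℕ) = L.card := by
  have hcard : L.card < l := (card_lt_univ_of_notMem hL).trans_eq (Fintype.card_fin l)
  suffices vShape L ⟨L.card, hcard⟩ = 0 by rw [← this, symm_apply_apply]
  rw [vShape, splice_apply_of_le L rfl _ _ ⟨L.card, hcard⟩ le_rfl]
  simp only [Perm.one_apply, Nat.sub_self]
  rw [orderEmbOfFin_zero _ (by omega)]
  exact le_antisymm (min'_le _ _ (mem_compl.mpr hL)) (Fin.zero_le _)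

lemma vShape_injOn [NeZero l] : Set.InjOn (vShape (l := l)) {L | 0 ∉ L} := by
  intro L hL L' hL' h
  have hcard : L.card = L'.card := by
    rw [← vShape_symm_zero hL, ← vShape_symm_zero hL', h]
  ext x
  rw [mem_iff_exists_splice_apply L rfl Fin.revPerm 1,
    mem_iff_exists_splice_apply L' rfl Fin.revPerm 1]
  simp only [vShape] at h
  rw [h, hcard]

lemma exists_vShape_eq [NeZero l] {ρ : Perm (Fin l)} (hρ : ρ ∈ overlineP l ∅) :
    ∃ L : Finset (Fin l), 0 ∉ L ∧ L.card + 2 ≤ l ∧ vShape L = ρ := by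
  obtain ⟨hnp, hl, hasc⟩ := mem_overlineP_empty.mp hρ
  obtain ⟨c, hc⟩ : ∃ c, (ρ.symm 0 : ℕ) = c := ⟨_, rfl⟩
  have hcl : c + 2 ≤ l := by
    by_contra! h
    exact (apply_lt_apply_of_le_symm_zero hnp (a := ⟨l - 2, by omega⟩) (b := ⟨l - 1, by omega⟩)
      (Fin.mk_lt_mk.mpr (by omega)) (by rw [Fin.le_def]; omega)).not_gt hasc
  obtain ⟨⟨⟨L, rfl⟩, σ, τ⟩, hsplice⟩ := (spliceMap_bijective (n := l) (p := c) (by omega)).2 ρ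
  simp only [spliceMap] at hsplice
  have hσ : σ = Fin.revPerm := by
    have hanti : StrictAnti σ := fun a b hab => by
      have := apply_lt_apply_of_le_symm_zero hnp (a := ⟨a, by omega⟩) (b := ⟨b, by omega⟩) hab
        (by simp only [Fin.le_def]; omega)
      rwa [← hsplice, splice_lt_splice_iff_of_lt] at this
    refine Equiv.ext (congrFun ((hanti.range_inj Fin.rev_strictAnti).mp ?_))
    rw [σ.surjective.range_eq, Fin.rev_surjective.range_eq]
  have hτ : τ = 1 := by
    have hmono : StrictMono τ := fun a b hab => by
      have := apply_lt_apply_of_symm_zero_le hnp (a := ⟨L.card + a, by omega⟩)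
        (b := ⟨L.card + b, by omega⟩) (by simp only [Fin.le_def]; omega)
        (Fin.mk_lt_mk.mpr (by omega))
      rw [← hsplice, splice_lt_splice_iff_of_le _ _ _ _ (by omega) (by omega)] at this
      simpa using this
    exact Equiv.ext (congrFun hmono.eq_id)
  subst hσ hτ
  refine ⟨L, ?_, hcl, hsplice⟩
  rw [mem_iff_exists_splice_apply L rfl _ _, hsplice]
  rintro ⟨i, hi, hi0⟩
  have := congrArg Fin.val (ρ.eq_symm_apply.mpr hi0)
  omega

lemma ncard_overlineP_empty (hl : 2 ≤ l) : (overlineP l ∅).ncard = 2 ^ (l - 1) - 1 := by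
  have : NeZero l := ⟨by omega⟩
  have hcard : (univ.erase (0 : Fin l)).card = l - 1 := by simp
  set B := (univ.erase (0 : Fin l)).powerset.erase (univ.erase 0)
  have hB (L : Finset (Fin l)) : L ∈ B ↔ 0 ∉ L ∧ L.card + 2 ≤ l := by
    rw [mem_erase, mem_powerset]
    constructor
    · rintro ⟨hne, hsub⟩
      have := card_lt_card (hsub.ssubset_of_ne hne)
      exact ⟨fun h => by simpa using hsub h, by omega⟩
    · rintro ⟨h0, hL⟩
      refine ⟨by rintro rfl; omega, fun x hx => mem_erase.mpr ⟨?_, mem_univ x⟩⟩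
      rintro rfl
      exact h0 hx
  have himg : overlineP l ∅ = vShape '' B := by
    ext ρ
    constructor
    · intro hρ
      obtain ⟨L, h0, hL, rfl⟩ := exists_vShape_eq hρ
      exact ⟨L, (hB L).mpr ⟨h0, hL⟩, rfl⟩
    · rintro ⟨L, hL, rfl⟩
      exact vShape_mem_overlineP_empty ((hB L).mp hL).2
  rw [himg, (vShape_injOn.mono fun L hL => ((hB L).mp hL).1).ncard_image,
    Set.ncard_coe_finset, card_erase_of_mem (mem_powerset_self _), card_powerset, hcard]

end Valley

lemma inter_Iio_eq_and_subset_Iic_iff {P T : Set ℕ} {p : ℕ} (hT : T ⊆ Set.Iio p)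
    (hP : ¬ (p ∈ P ∧ p + 1 ∈ P)) :
    P ∩ Set.Iio p = T ∧ P ⊆ Set.Iic (p + 1) ↔ P = T ∨ P = insert p T ∨ P = insert (p + 1) T := by
  simp only [Set.subset_def, Set.mem_Iio, Set.mem_Iic] at hT ⊢
  constructor
  · rintro ⟨rfl, hsub⟩
    simp only [Set.ext_iff, Set.mem_inter_iff, Set.mem_Iio, Set.mem_insert_iff]
    by_cases hp : p ∈ P <;> by_cases hq : p + 1 ∈ P
    · exact absurd ⟨hp, hq⟩ hP
    · exact Or.inr (Or.inl fun i => by grind)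
    · exact Or.inr (Or.inr fun i => by grind)
    · exact Or.inl fun i => by grind
  · rintro (rfl | rfl | rfl) <;> exact ⟨Set.ext fun i => by grind, fun i hi => by grind⟩

def lowPeakSet (n p : ℕ) (T : Finset ℕ) : Set (Perm (Fin n)) :=
  {π | peakSet π ∩ Set.Iio p = T ∧ peakSet π ⊆ Set.Iic (p + 1) ∧ EndsAscent n π}

lemma lowPeakSet_eq_union {n p : ℕ} {T : Finset ℕ} (hT : ∀ i ∈ T, i < p) :
    lowPeakSet n p T =
      overlineP n T ∪ overlineP n (insert p T) ∪ overlineP n (insert (p + 1) T) := by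
  ext π
  have hP : ¬ (p ∈ peakSet π ∧ p + 1 ∈ peakSet π) := fun h => not_isPeak_add_one h.1 h.2
  have := inter_Iio_eq_and_subset_Iic_iff (T := T) hT hP
  simp only [lowPeakSet, Set.mem_union, mem_overlineP, Set.mem_ofPred_eq, coe_insert,
    ← or_and_right, ← and_assoc, this, or_assoc]

lemma ncard_lowPeakSet_eq_add {n p : ℕ} {T : Finset ℕ} (hT : ∀ i ∈ T, i < p) :
    (lowPeakSet n p T).ncard = (overlineP n T).ncard + (overlineP n (insert p T)).ncard +
      (overlineP n (insert (p + 1) T)).ncard := by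
  have hp : p ∉ T := fun h => (hT p h).false
  have hp1 : p + 1 ∉ insert p T := by simpa using fun h => (hT _ h).asymm (by omega)
  have h₁ : T ≠ insert p T := fun h => hp (h ▸ mem_insert_self p T)
  have h₂ : T ≠ insert (p + 1) T := fun h => hp1 (mem_insert_of_mem (h ▸ mem_insert_self _ T))
  have h₃ : insert p T ≠ insert (p + 1) T := fun h => hp1 (h ▸ mem_insert_self _ T)
  rw [lowPeakSet_eq_union hT, Set.ncard_union_eq (Set.disjoint_union_left.mpr
      ⟨disjoint_overlineP h₂, disjoint_overlineP h₃⟩),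
    Set.ncard_union_eq (disjoint_overlineP h₁)]

lemma splice_mem_lowPeakSet_iff {n p : ℕ} (hpn : p + 2 ≤ n) (T : Finset ℕ)
    (V : Finset (Fin n)) (hV : V.card = p) (σ : Perm (Fin p)) (ρ : Perm (Fin (n - p))) :
    splice V hV σ ρ ∈ lowPeakSet n p T ↔ σ ∈ peakSetEq p T ∧ ρ ∈ overlineP (n - p) ∅ := by
  have low : peakSet (splice V hV σ ρ) ∩ Set.Iio p = peakSet σ := Set.ext fun i =>
    ⟨fun h => (isPeak_splice_iff_left V hV σ ρ h.2).mp h.1,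
      fun h => ⟨(isPeak_splice_iff_left V hV σ ρ h.1.2).mpr h, h.1.2⟩⟩
  have high : peakSet (splice V hV σ ρ) ⊆ Set.Iic (p + 1) ↔ ∀ j, ¬ IsPeak ρ j := by
    refine ⟨fun h j hj => ?_, fun h i hi => Set.mem_Iic.mpr (not_lt.mp fun hpi => ?_)⟩
    · have hj1 := hj.1.1
      have : j + p ∈ peakSet (splice V hV σ ρ) := by
        rwa [peakSet, Set.mem_ofPred_eq, isPeak_splice_iff_right V hV σ ρ (by omega),
          Nat.add_sub_cancel]
      exact absurd (Set.mem_Iic.mp (h this)) (by omega)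
    · exact h _ ((isPeak_splice_iff_right V hV σ ρ hpi).mp hi)
  rw [lowPeakSet, Set.mem_ofPred_eq, low, high, mem_peakSetEq, mem_overlineP_empty,
    endsAscent_splice_iff V hV σ ρ hpn]

lemma ncard_lowPeakSet {n p : ℕ} (hpn : p + 2 ≤ n) (T : Finset ℕ) :
    (lowPeakSet n p T).ncard =
      n.choose p * (peakSetEq p T).ncard * (overlineP (n - p) ∅).ncard := by
  have hbij := spliceMap_bijective (n := n) (p := p) (by omega)
  have hpre : spliceMap n p ⁻¹' lowPeakSet n p T =
      Set.univ ×ˢ peakSetEq p T ×ˢ overlineP (n - p) ∅ := by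
    ext ⟨⟨V, hV⟩, σ, ρ⟩
    simp [spliceMap, splice_mem_lowPeakSet_iff hpn]
  rw [← Set.image_preimage_eq (lowPeakSet n p T) hbij.2, Set.ncard_image_of_injective _ hbij.1,
    hpre, Set.ncard_prod, Set.ncard_prod, Set.ncard_univ, Nat.card_eq_fintype_card,
    Fintype.card_finset_len, Fintype.card_fin, mul_assoc]

end PeakSet

open PeakSet in
theorem stmt3_general (n : ℕ) (S S₁ S₂ : Finset ℕ) (hS : S.Nonempty)
    (hadm : (peakSetEq n S).Nonempty)
    (m : ℕ) (hm : m = S.max' hS) (hS₁ : S₁ = S.erase m) (hS₂ : S₂ = insert (m - 1) S₁) :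
    ((overlineP n S).ncard : ℤ) =
      (n.choose (m - 1) : ℤ) * (2 ^ (n - m) - 1) * ((peakSetEq (m - 1) S₁).ncard : ℤ)
        - ((overlineP n S₁).ncard : ℤ) - ((overlineP n S₂).ncard : ℤ) := by
  obtain ⟨π, hπ⟩ := hadm
  have hmS : m ∈ S := hm ▸ S.max'_mem hS
  obtain ⟨⟨hm1, hmn⟩, -⟩ := (hπ m).mpr hmS
  have hS₁_lt : ∀ i ∈ S₁, i < m - 1 := by
    intro i hi
    rw [hS₁, hm] at hi
    exact hm ▸ lt_max'_sub_one_of_mem_erase hS ⟨π, hπ⟩ hi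
  have hS_eq : S = insert (m - 1 + 1) S₁ := by
    rw [Nat.sub_add_cancel (by omega), hS₁, insert_erase hmS]
  have hcount := (ncard_lowPeakSet_eq_add (n := n) hS₁_lt).symm.trans
    (ncard_lowPeakSet (by omega) S₁)
  rw [ncard_overlineP_empty (by omega), ← hS₂, ← hS_eq, show n - (m - 1) - 1 = n - m by omega]
    at hcount
  have hpow : 1 ≤ 2 ^ (n - m) := Nat.one_le_two_pow
  zify [hpow] at hcount
  linarith

theorem stmt3 (n : ℕ) (S S₁ S₂ : Finset ℕ) (hS : S.Nonempty)
    (hSsub : ∀ x ∈ S, 0 < x ∧ x < n) (hadm : (peakSetEq n S).Nonempty)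
    (m : ℕ) (hm : m = S.max' hS) (hS₁ : S₁ = S.erase m) (hS₂ : S₂ = insert (m - 1) S₁) :
    ((overlineP n S).ncard : ℤ) =
      (n.choose (m - 1) : ℤ) * (2 ^ (n - m) - 1) * ((peakSetEq (m - 1) S₁).ncard : ℤ)
        - ((overlineP n S₁).ncard : ℤ) - ((overlineP n S₂).ncard : ℤ) :=
  stmt3_general n S S₁ S₂ hS hadm m hm hS₁ hS₂
end

section
/- Let S ⊆ {1,…,n−1} be a nonempty admissible set, let m = max(S), fix an integer k with 1 ≤ k ≤ n, and set S₁ = S∖{m} and S₂ = S₁ ∪ {m−1}. Then |P(S;n)_{↘k}| = C(n−k, n−m)·|P(S₁;m−1)| − |P(S₁;n)_{↘k}| − |P(S₂;n)_{↘k}|, where C(a,b) denotes the binomial coefficient. -/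
/-!
A permutation in `descTo n S k` has no peak after its largest peak `m` and ends with a descent,
so it decreases from position `m` on. Dropping the conditions at positions `m - 1` and `m`
leaves the set `descTail n m k S₁`: last value `k`, decreasing from position `m`, peaks `S₁`
before `m - 1`. Such a permutation is the same as a choice of the `n - m` values at positions
`m, …, n - 1` among the `n - k` values above `k`, together with the pattern of its first
`m - 1` entries, an element of `P(S₁; m - 1)`. Since peaks are never adjacent, `descTail n m k S₁`
splits into the permutations with a peak at `m` (peak set `S`), at `m - 1` (peak set `S₂`), or at
neither (peak set `S₁`).
-/

open Equiv

section Peaks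

variable {n : ℕ} {π : Perm (Fin n)}

theorem IsPeak.not_isPeak_succ {i : ℕ} (h : IsPeak π i) : ¬ IsPeak π (i + 1) := by
  obtain ⟨_, _, hdown⟩ := h
  rintro ⟨_, hup, _⟩
  exact hdown.asymm hup

theorem lt_of_not_isPeak {j : ℕ} (hj : j + 2 < n) (hpk : ¬ IsPeak π (j + 2))
    (h : π ⟨j + 2, hj⟩ < π ⟨j + 1, by omega⟩) : π ⟨j + 1, by omega⟩ < π ⟨j, by omega⟩ := by
  refine lt_of_le_of_ne (not_lt.1 fun hup => hpk ⟨⟨by omega, hj⟩, hup, h⟩) fun he => ?_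
  simpa using π.injective he

theorem strictAntiOn_of_endsDescent {t : ℕ} (hd : EndsDescent n π)
    (hnp : ∀ i, t + 2 ≤ i → ¬ IsPeak π i) : StrictAntiOn π {j | t ≤ (j : ℕ)} := by
  have step : ∀ d j (hj : j + 1 < n), t ≤ j → n - 2 - j = d →
      π ⟨j + 1, hj⟩ < π ⟨j, by omega⟩ := by
    intro d
    induction d with
    | zero =>
      intro j hj _ hjd
      obtain ⟨_, hlast⟩ := hd
      convert hlast using 3 <;> omega
    | succ d ih =>
      intro j hj htj hjd
      exact lt_of_not_isPeak (by omega) (hnp _ (by omega))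
        (ih _ (by omega) (by omega) (by omega))
  rintro ⟨a, ha⟩ (hta : t ≤ a) ⟨b, hb⟩ (_ : t ≤ b) hab
  replace hab : a + 1 ≤ b := Fin.mk_lt_mk.1 hab
  induction b, hab using Nat.le_induction with
  | base => exact step _ a hb hta rfl
  | succ b hab ih => exact (step _ b hb (by omega) rfl).trans (ih (by omega) (by omega))

theorem StrictAntiOn.not_isPeak {t i : ℕ} (h : StrictAntiOn π {j | t ≤ (j : ℕ)})
    (hi : t + 2 ≤ i) : ¬ IsPeak π i := fun ⟨_, hup, _⟩ =>
  (h (show t ≤ i - 2 by omega) (show t ≤ i - 1 by omega) (Fin.mk_lt_mk.2 (by omega))).asymm hup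

theorem StrictAntiOn.endsDescent {t : ℕ} (h : StrictAntiOn π {j | t ≤ (j : ℕ)})
    (ht : t + 2 ≤ n) : EndsDescent n π :=
  ⟨by omega, h (show t ≤ n - 2 by omega) (show t ≤ n - 1 by omega) (Fin.mk_lt_mk.2 (by omega))⟩

end Peaks

-- With 0-based `j`, the condition `m - 1 ≤ j` selects the entries from position `m` on.
def descTail (n m k : ℕ) (R : Finset ℕ) : Set (Perm (Fin n)) :=
  {π | (∃ h : 0 < n, (π ⟨n - 1, by omega⟩ : ℕ) + 1 = k) ∧
    StrictAntiOn π {j | m - 1 ≤ (j : ℕ)} ∧ ∀ i < m - 1, (IsPeak π i ↔ i ∈ R)}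

theorem descTo_eq_sep_descTail {n m k : ℕ} {R S₁ : Finset ℕ} (hm : 0 < m) (hmn : m < n)
    (hR : ∀ x ∈ R, x ≤ m) (hRS₁ : ∀ i < m - 1, i ∈ R ↔ i ∈ S₁) :
    descTo n R k = {π ∈ descTail n m k S₁ |
      (IsPeak π (m - 1) ↔ m - 1 ∈ R) ∧ (IsPeak π m ↔ m ∈ R)} := by
  ext π
  constructor
  · rintro ⟨hpk, h2, hd, hval⟩
    have hanti := strictAntiOn_of_endsDescent (t := m - 1) ⟨h2, hd⟩ fun i hi hpki => by
      have := hR i ((hpk i).1 hpki)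
      omega
    exact ⟨⟨⟨by omega, hval⟩, hanti, fun i hi => (hpk i).trans (hRS₁ i hi)⟩, hpk _, hpk _⟩
  · rintro ⟨⟨⟨_, hval⟩, hanti, hpre⟩, hpm1, hpm⟩
    obtain ⟨h2, hd⟩ := hanti.endsDescent (by omega)
    refine ⟨fun i => ?_, h2, hd, hval⟩
    rcases lt_or_ge i (m - 1) with hi | hi
    · exact (hpre i hi).trans (hRS₁ i hi).symm
    obtain rfl | rfl | hi := (by omega : i = m - 1 ∨ i = m ∨ m + 1 ≤ i)
    · exact hpm1
    · exact hpm
    · exact iff_of_false (hanti.not_isPeak (by omega)) fun hiR => by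
        have := hR i hiR
        omega

theorem Set.ncard_eq_sep_add_sep_add_sep {α : Type*} {s : Set α} (hs : s.Finite)
    {p q : α → Prop} (hpq : ∀ a ∈ s, ¬ (p a ∧ q a)) :
    s.ncard = {a ∈ s | ¬ p a ∧ q a}.ncard + {a ∈ s | ¬ p a ∧ ¬ q a}.ncard +
      {a ∈ s | p a ∧ ¬ q a}.ncard := by
  have split : ∀ (t : Set α) (r : α → Prop), t.Finite →
      t.ncard = {a ∈ t | r a}.ncard + {a ∈ t | ¬ r a}.ncard := fun t r ht =>
    (Set.ncard_inter_add_ncard_sdiff_eq_ncard t {a | r a} ht).symm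
  have hp : {a ∈ s | p a} = {a ∈ s | p a ∧ ¬ q a} :=
    Set.ext fun a => ⟨fun h => ⟨h.1, h.2, fun hq => hpq a h.1 ⟨h.2, hq⟩⟩, fun h => ⟨h.1, h.2.1⟩⟩
  have nested : ∀ r : α → Prop, {a ∈ {a ∈ s | ¬ p a} | r a} = {a ∈ s | ¬ p a ∧ r a} :=
    fun r => Set.ext fun _ => and_assoc
  rw [split s p hs, split {a ∈ s | ¬ p a} q (hs.subset (Set.sep_subset _ _)), hp, nested,
    nested]
  ring

theorem ncard_descTail_eq_add {n m k : ℕ} {R : Finset ℕ} (hm : 0 < m) (hmn : m < n)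
    (hR : ∀ x ∈ R, x < m - 1) :
    (descTail n m k R).ncard = (descTo n (insert m R) k).ncard + (descTo n R k).ncard +
      (descTo n (insert (m - 1) R) k).ncard := by
  have hmR : m ∉ R := fun h => by
    have := hR m h
    omega
  have hm1R : m - 1 ∉ R := fun h => lt_irrefl _ (hR _ h)
  have hle : ∀ a ≤ m, ∀ x ∈ insert a R, x ≤ m := fun a ha x hx => by
    rcases Finset.mem_insert.1 hx with rfl | hx
    · exact ha
    · exact (hR x hx).le.trans (Nat.sub_le m 1)
  have hpre : ∀ a ≥ m - 1, ∀ i < m - 1, i ∈ insert a R ↔ i ∈ R := fun a ha i hi => by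
    rw [Finset.mem_insert, or_iff_right (by omega)]
  rw [descTo_eq_sep_descTail hm hmn (hle m le_rfl) (hpre m (Nat.sub_le m 1)),
    descTo_eq_sep_descTail hm hmn (fun x hx => (hle m le_rfl) x (Finset.mem_insert_of_mem hx))
      fun _ _ => Iff.rfl,
    descTo_eq_sep_descTail hm hmn (hle (m - 1) (Nat.sub_le m 1)) (hpre (m - 1) le_rfl)]
  have hne : m ≠ m - 1 := by omega
  simp only [Finset.mem_insert, hne, hne.symm, hmR, hm1R, or_false, iff_true, iff_false]
  exact Set.ncard_eq_sep_add_sep_add_sep (Set.toFinite _) fun π _ h =>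
    h.1.not_isPeak_succ (by rw [Nat.sub_add_cancel hm]; exact h.2)

theorem Finset.orderEmbOfFin_sort_inv {α : Type*} [LinearOrder α] {r : ℕ} {s : Finset α}
    (h : s.card = r) {f : Fin r → α} (hf : Function.Injective f) (hfs : ∀ i, f i ∈ s)
    (i : Fin r) : s.orderEmbOfFin h ((Tuple.sort f)⁻¹ i) = f i := by
  have hsort := Finset.orderEmbOfFin_unique h (fun _ => hfs _)
    ((Tuple.monotone_sort f).strictMono_of_injective (hf.comp (Tuple.sort f).injective))
  rw [← hsort]
  simp only [Perm.coe_inv, apply_symm_apply]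

-- The values at positions `m, …, n - 1` (1-based), enumerated from the right.
def tailValues {n : ℕ} (m : ℕ) (π : Perm (Fin n)) : Finset (Fin n) :=
  Finset.univ.image fun t : Fin (n - m) => π ⟨n - 2 - t, by omega⟩

section Tail

variable {n m : ℕ} {π : Perm (Fin n)} (hm : 0 < m) (hanti : StrictAntiOn π {j | m - 1 ≤ (j : ℕ)})
include hm hanti

theorem strictMono_tail : StrictMono fun t : Fin (n - m) => π ⟨n - 2 - t, by omega⟩ :=
  fun a b (hab : (a : ℕ) < b) => hanti (show m - 1 ≤ n - 2 - b by omega)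
    (show m - 1 ≤ n - 2 - a by omega) (Fin.mk_lt_mk.2 (by omega))

theorem card_tailValues : (tailValues m π).card = n - m := by
  rw [tailValues, Finset.card_image_of_injective _ (strictMono_tail hm hanti).injective,
    Finset.card_univ, Fintype.card_fin]

theorem orderEmbOfFin_tailValues (t : Fin (n - m)) :
    (tailValues m π).orderEmbOfFin (card_tailValues hm hanti) t = π ⟨n - 2 - t, by omega⟩ := by
  rw [← Finset.orderEmbOfFin_unique (s := tailValues m π) _
    (fun t => Finset.mem_image_of_mem _ (Finset.mem_univ t)) (strictMono_tail hm hanti)]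

theorem tailValues_subset_Ioi (hn : 0 < n) :
    tailValues m π ⊆ Finset.Ioi (π ⟨n - 1, by omega⟩) := by
  intro v hv
  obtain ⟨t, -, rfl⟩ := Finset.mem_image.1 hv
  have := t.isLt
  exact Finset.mem_Ioi.2 (hanti (show m - 1 ≤ n - 2 - t by omega) (show m - 1 ≤ n - 1 by omega)
    (Fin.mk_lt_mk.2 (by omega)))

end Tail

section Assemble

variable {n m : ℕ} {K : Fin n} {T : Finset (Fin n)}

theorem sub_le_of_subset_Ioi (hT : T ⊆ Finset.Ioi K) (hTc : T.card = n - m) :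
    n - m ≤ n - 1 - K :=
  hTc ▸ (Finset.card_le_card hT).trans_eq (Fin.card_Ioi K)

theorem card_compl_insert (hmn : m ≤ n) (hT : T ⊆ Finset.Ioi K) (hTc : T.card = n - m) :
    (insert K T)ᶜ.card = m - 1 := by
  have := K.pos
  rw [Finset.card_compl, Finset.card_insert_of_notMem fun h => by simpa using hT h, hTc,
    Fintype.card_fin]
  omega

def assembleFun (hmn : m ≤ n) (hT : T ⊆ Finset.Ioi K) (hTc : T.card = n - m)
    (σ : Perm (Fin (m - 1))) (i : Fin n) : Fin n :=
  if h : (i : ℕ) < m - 1 then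
    (insert K T)ᶜ.orderEmbOfFin (card_compl_insert hmn hT hTc) (σ ⟨i, h⟩)
  else if h' : (i : ℕ) + 1 < n then T.orderEmbOfFin hTc ⟨n - 2 - i, by omega⟩
  else K

variable {hmn : m ≤ n} {hT : T ⊆ Finset.Ioi K} {hTc : T.card = n - m} {σ : Perm (Fin (m - 1))}

theorem assembleFun_of_lt {i : Fin n} (hi : (i : ℕ) < m - 1) :
    assembleFun hmn hT hTc σ i =
      (insert K T)ᶜ.orderEmbOfFin (card_compl_insert hmn hT hTc) (σ ⟨i, hi⟩) :=
  dif_pos hi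

theorem assembleFun_of_le_of_lt {i : Fin n} (h₁ : m - 1 ≤ i) (h₂ : (i : ℕ) + 1 < n) :
    assembleFun hmn hT hTc σ i = T.orderEmbOfFin hTc ⟨n - 2 - i, by omega⟩ := by
  rw [assembleFun, dif_neg (by omega), dif_pos h₂]

theorem assembleFun_of_add_one_eq {i : Fin n} (hi : (i : ℕ) + 1 = n) :
    assembleFun hmn hT hTc σ i = K := by
  rw [assembleFun, dif_neg (by omega), dif_neg (by omega)]

theorem assembleFun_surjective : Function.Surjective (assembleFun hmn hT hTc σ) := by
  have := sub_le_of_subset_Ioi hT hTc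
  have := K.isLt
  intro v
  by_cases hvK : v = K
  · exact ⟨⟨n - 1, by omega⟩,
      (assembleFun_of_add_one_eq (by simp only; omega)).trans hvK.symm⟩
  by_cases hvT : v ∈ T
  · obtain ⟨t, rfl⟩ : v ∈ Set.range (T.orderEmbOfFin hTc) := by
      rwa [Finset.range_orderEmbOfFin]
    refine ⟨⟨n - 2 - t, by omega⟩, ?_⟩
    rw [assembleFun_of_le_of_lt (by simp only; omega) (by simp only; omega)]
    exact congrArg _ (Fin.ext (by simp only; omega))
  · obtain ⟨s, rfl⟩ :
        v ∈ Set.range ((insert K T)ᶜ.orderEmbOfFin (card_compl_insert hmn hT hTc)) := by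
      rw [Finset.range_orderEmbOfFin]
      simp [hvK, hvT]
    refine ⟨⟨σ⁻¹ s, by omega⟩, ?_⟩
    rw [assembleFun, dif_pos (σ⁻¹ s).isLt]
    simp

-- Inverse to `π ↦ (tailValues m π, pattern of the first m - 1 entries)` on `descTail`.
variable (hmn hT hTc σ) in
noncomputable def assemble : Perm (Fin n) :=
  Equiv.ofBijective _ (Finite.surjective_iff_bijective.1
    (assembleFun_surjective (hmn := hmn) (hT := hT) (hTc := hTc) (σ := σ)))

@[simp]
theorem assemble_apply (i : Fin n) : assemble hmn hT hTc σ i = assembleFun hmn hT hTc σ i :=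
  rfl

theorem assemble_lt_assemble_iff {a b : Fin n} (ha : (a : ℕ) < m - 1) (hb : (b : ℕ) < m - 1) :
    assemble hmn hT hTc σ a < assemble hmn hT hTc σ b ↔ σ ⟨a, ha⟩ < σ ⟨b, hb⟩ := by
  rw [assemble_apply, assemble_apply, assembleFun_of_lt ha, assembleFun_of_lt hb]
  exact OrderEmbedding.lt_iff_lt _

theorem isPeak_assemble_iff {i : ℕ} (hi : i < m - 1) :
    IsPeak (assemble hmn hT hTc σ) i ↔ IsPeak σ i := by
  constructor
  · rintro ⟨⟨h1, _⟩, hup, hdown⟩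
    exact ⟨⟨h1, hi⟩,
      (assemble_lt_assemble_iff (by simp only; omega) (by simp only; omega)).1 hup,
      (assemble_lt_assemble_iff (by simp only; omega) (by simp only; omega)).1 hdown⟩
  · rintro ⟨⟨h1, _⟩, hup, hdown⟩
    exact ⟨⟨h1, by omega⟩,
      (assemble_lt_assemble_iff (by simp only; omega) (by simp only; omega)).2 hup,
      (assemble_lt_assemble_iff (by simp only; omega) (by simp only; omega)).2 hdown⟩

theorem assemble_mem_descTail {k : ℕ} {R : Finset ℕ} (hK : (K : ℕ) + 1 = k)
    (hσ : σ ∈ peakSetEq (m - 1) R) : assemble hmn hT hTc σ ∈ descTail n m k R := by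
  have hn := K.pos
  refine ⟨⟨hn, ?_⟩, ?_, fun i hi => (isPeak_assemble_iff hi).trans (hσ i)⟩
  · rw [assemble_apply, assembleFun_of_add_one_eq (by simp only; omega), hK]
  rintro a (ha : m - 1 ≤ a) b (hb : m - 1 ≤ b) (hab : (a : ℕ) < b)
  rw [assemble_apply, assemble_apply, assembleFun_of_le_of_lt ha (by omega)]
  rcases lt_or_ge ((b : ℕ) + 1) n with hb' | hb'
  · rw [assembleFun_of_le_of_lt hb hb']
    exact (T.orderEmbOfFin hTc).strictMono (Fin.mk_lt_mk.2 (by omega))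
  · rw [assembleFun_of_add_one_eq (by omega)]
    exact Finset.mem_Ioi.1 (hT (T.orderEmbOfFin_mem hTc _))

theorem tailValues_assemble : tailValues m (assemble hmn hT hTc σ) = T := by
  have := sub_le_of_subset_Ioi hT hTc
  refine (Finset.image_congr fun t _ => ?_).trans (T.image_orderEmbOfFin_univ hTc)
  have := t.isLt
  rw [assemble_apply, assembleFun_of_le_of_lt (by simp only; omega) (by simp only; omega)]
  exact congrArg _ (Fin.ext (by simp only; omega))

theorem assemble_inj {T' : Finset (Fin n)} {hT' : T' ⊆ Finset.Ioi K} {hTc' : T'.card = n - m}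
    {σ' : Perm (Fin (m - 1))} (h : assemble hmn hT hTc σ = assemble hmn hT' hTc' σ') :
    T = T' ∧ σ = σ' := by
  obtain rfl : T = T' := by
    rw [← tailValues_assemble (hmn := hmn) (hT := hT) (hTc := hTc) (σ := σ), h,
      tailValues_assemble]
  refine ⟨rfl, Equiv.ext fun i => ?_⟩
  have hi := DFunLike.congr_fun h ⟨i, by omega⟩
  simp only [assemble_apply, assembleFun, dif_pos i.isLt] at hi
  exact ((insert K T)ᶜ.orderEmbOfFin _).injective hi

end Assemble

theorem exists_assemble_eq {n m k : ℕ} {R : Finset ℕ} {K : Fin n} (hK : (K : ℕ) + 1 = k)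
    (hm : 0 < m) (hmn : m ≤ n) (hR : ∀ x ∈ R, x < m - 1) {π : Perm (Fin n)}
    (hπ : π ∈ descTail n m k R) :
    ∃ (T : Finset (Fin n)) (hT : T ⊆ Finset.Ioi K) (hTc : T.card = n - m),
      ∃ σ ∈ peakSetEq (m - 1) R, assemble hmn hT hTc σ = π := by
  obtain ⟨⟨hn, hlast⟩, hanti, hpre⟩ := hπ
  have hlastK : π ⟨n - 1, by omega⟩ = K := Fin.ext (by omega)
  have hT := hlastK ▸ tailValues_subset_Ioi hm hanti hn
  have hTc := card_tailValues hm hanti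
  let f : Fin (m - 1) → Fin n := fun i => π ⟨i, by omega⟩
  have hf : Function.Injective f := fun a b h => Fin.ext (by simpa using π.injective h)
  have hfW : ∀ i, f i ∈ (insert K (tailValues m π))ᶜ := by
    intro i
    have hpos : ∀ j (hj : j < n), π ⟨j, hj⟩ = f i → j = i := fun j hj h =>
      Fin.mk.inj_iff.1 (π.injective h)
    simp only [Finset.mem_compl, Finset.mem_insert, not_or, ← hlastK, tailValues,
      Finset.mem_image, Finset.mem_univ, true_and, not_exists]
    refine ⟨fun h => ?_, fun t h => ?_⟩
    · have := hpos _ _ h.symm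
      omega
    · have := hpos _ _ h
      omega
  -- `(Tuple.sort f)⁻¹` is the pattern of the first `m - 1` entries.
  have hassemble : assemble hmn hT hTc (Tuple.sort f)⁻¹ = π := by
    refine Equiv.ext fun i => ?_
    rw [assemble_apply]
    rcases lt_or_ge (i : ℕ) (m - 1) with hi | hi
    · rw [assembleFun_of_lt hi, Finset.orderEmbOfFin_sort_inv _ hf hfW]
    rcases lt_or_ge ((i : ℕ) + 1) n with hi' | hi'
    · rw [assembleFun_of_le_of_lt hi hi', orderEmbOfFin_tailValues hm hanti]
      exact congrArg π (Fin.ext (by simp only; omega))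
    · rw [assembleFun_of_add_one_eq (by omega), ← hlastK]
      exact congrArg π (Fin.ext (by simp only; omega))
  refine ⟨_, hT, hTc, _, fun i => ?_, hassemble⟩
  rcases lt_or_ge i (m - 1) with hi | hi
  · rw [← isPeak_assemble_iff (hmn := hmn) (hT := hT) (hTc := hTc) hi, hassemble, hpre i hi]
  · exact iff_of_false (fun ⟨⟨_, h⟩, _⟩ => by omega) fun h => by
      have := hR i h
      omega

theorem ncard_descTail {n m k : ℕ} {R : Finset ℕ} (hm : 0 < m) (hmn : m ≤ n) (hk : 1 ≤ k)
    (hkn : k ≤ n) (hR : ∀ x ∈ R, x < m - 1) :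
    (descTail n m k R).ncard = (n - k).choose (n - m) * (peakSetEq (m - 1) R).ncard := by
  let K : Fin n := ⟨k - 1, by omega⟩
  have hK : (K : ℕ) + 1 = k := by simp only [K]; omega
  have hTs : ∀ {T}, T ∈ Finset.powersetCard (n - m) (Finset.Ioi K) →
      T ⊆ Finset.Ioi K ∧ T.card = n - m := Finset.mem_powersetCard.1
  have hchoose : (n - k).choose (n - m) = (Finset.powersetCard (n - m) (Finset.Ioi K)).card := by
    rw [Finset.card_powersetCard, Fin.card_Ioi]
    congr 1
    omega
  rw [hchoose, ← Set.ncard_coe_finset, ← Set.ncard_prod]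
  symm
  refine Set.ncard_congr (fun p hp => assemble hmn (hTs hp.1).1 (hTs hp.1).2 p.2)
    (fun p hp => assemble_mem_descTail hK hp.2) (fun p q _ _ h => ?_) fun π hπ => ?_
  · obtain ⟨hT, hσ⟩ := assemble_inj h
    exact Prod.ext hT hσ
  · obtain ⟨T, hT, hTc, σ, hσ, rfl⟩ := exists_assemble_eq hK hm hmn hR hπ
    exact ⟨(T, σ), ⟨Finset.mem_powersetCard.2 ⟨hT, hTc⟩, hσ⟩, rfl⟩

theorem sub_one_notMem_of_mem_peakSetEq {n : ℕ} {S : Finset ℕ} {π : Perm (Fin n)}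
    (hπ : π ∈ peakSetEq n S) {i : ℕ} (hi : i ∈ S) : i - 1 ∉ S := fun h => by
  obtain ⟨⟨hi1, -⟩, -⟩ := (hπ i).2 hi
  exact ((hπ _).2 h).not_isPeak_succ (by rw [Nat.sub_add_cancel hi1.le, hπ]; exact hi)

theorem stmt4_general (n k : ℕ) (S S₁ S₂ : Finset ℕ) (hS : S.Nonempty)
    (hadm : (peakSetEq n S).Nonempty)
    (m : ℕ) (hm : m = S.max' hS) (hS₁ : S₁ = S.erase m) (hS₂ : S₂ = insert (m - 1) S₁)
    (hk1 : 1 ≤ k) (hkn : k ≤ n) :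
    ((descTo n S k).ncard : ℤ) =
      ((n - k).choose (n - m) : ℤ) * ((peakSetEq (m - 1) S₁).ncard : ℤ)
        - ((descTo n S₁ k).ncard : ℤ) - ((descTo n S₂ k).ncard : ℤ) := by
  obtain ⟨π₀, hπ₀⟩ := hadm
  have hmS : m ∈ S := hm ▸ S.max'_mem hS
  obtain ⟨⟨hm1, hmn⟩, -⟩ := (hπ₀ m).2 hmS
  have hS₁lt : ∀ x ∈ S₁, x < m - 1 := fun x hx => by
    rw [hS₁, Finset.mem_erase] at hx
    have : x ≤ m := hm ▸ S.le_max' x hx.2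
    have := ne_of_mem_of_not_mem hx.2 (sub_one_notMem_of_mem_peakSetEq hπ₀ hmS)
    omega
  have hSins : insert m S₁ = S := hS₁ ▸ Finset.insert_erase hmS
  have hsplit := ncard_descTail_eq_add (k := k) (by omega) hmn hS₁lt
  rw [ncard_descTail (by omega) hmn.le hk1 hkn hS₁lt, hSins, ← hS₂] at hsplit
  rw [← Nat.cast_mul, hsplit]
  push_cast
  ring

theorem stmt4 (n k : ℕ) (S S₁ S₂ : Finset ℕ) (hS : S.Nonempty)
    (hSsub : ∀ x ∈ S, 0 < x ∧ x < n) (hadm : (peakSetEq n S).Nonempty)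
    (m : ℕ) (hm : m = S.max' hS) (hS₁ : S₁ = S.erase m) (hS₂ : S₂ = insert (m - 1) S₁)
    (hk1 : 1 ≤ k) (hkn : k ≤ n) :
    ((descTo n S k).ncard : ℤ) =
      ((n - k).choose (n - m) : ℤ) * ((peakSetEq (m - 1) S₁).ncard : ℤ)
        - ((descTo n S₁ k).ncard : ℤ) - ((descTo n S₂ k).ncard : ℤ) :=
  stmt4_general n k S S₁ S₂ hS hadm m hm hS₁ hS₂ hk1 hkn
end

section
/- Let S ⊆ {1,…,n−1} be a nonempty admissible set, let m = max(S), and set S₁ = S∖{m} and S₂ = S₁ ∪ {m−1}. Then |underline{P(S;n)}| = C(n, m−1)·|P(S₁;m−1)| − |underline{P(S₁;n)}| − |underline{P(S₂;n)}|, where C(a,b) denotes the binomial coefficient. -/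
open Equiv

/-!
Let `D(k, S₁)` be the set of `π ∈ S_n` whose peaks at positions `< k` form `S₁` and which
decrease strictly after position `k`. Such a `π` is determined by the set of its first `k` values
and the relative order of those values, which can be any element of `P(S₁;k)`; hence
`|D(k, S₁)| = C(n,k)·|P(S₁;k)|`. A permutation of `D(k, S₁)` ends with a descent and, since two
peaks are never adjacent, has peak set `S₁`, `S₁ ∪ {k}` or `S₁ ∪ {k+1}`. Conversely a permutation
ending with a descent and without peaks after position `k + 1` decreases after position `k`.
So `D(k, S₁)` is the disjoint union of `underline{P(S₁;n)}`, `underline{P(S₁ ∪ {k};n)}` and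
`underline{P(S₁ ∪ {k+1};n)}`; take `k = m - 1`.
-/

open Equiv

section

variable {n k : ℕ}

lemma IsPeak.not_isPeak_succ_s5 {π : Perm (Fin n)} {p : ℕ} (h : IsPeak π p) :
    ¬ IsPeak π (p + 1) := by
  rintro ⟨_, hl, -⟩
  obtain ⟨_, -, hr⟩ := h
  exact lt_asymm hl hr

lemma peakSetEq_disjoint {S T : Finset ℕ} (h : S ≠ T) :
    Disjoint (peakSetEq n S) (peakSetEq n T) := by
  refine Set.disjoint_left.2 fun π hS hT => h (Finset.ext fun p => ?_)
  rw [← hS p, hT p]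

lemma Fin.strictAntiOn_of_succ_lt {α : Type*} [Preorder α] {f : Fin n → α} {a : ℕ}
    (hf : ∀ i (hi : i + 1 < n), a ≤ i → f ⟨i + 1, hi⟩ < f ⟨i, by omega⟩) :
    StrictAntiOn f {i | a ≤ (i : ℕ)} := by
  rintro ⟨i, hi⟩ (hai : a ≤ i) ⟨j, hj⟩ - (hij : i < j)
  induction j, hij using Nat.le_induction with
  | base => exact hf i hj hai
  | succ j hij ih => exact (hf j hj (by omega)).trans (ih (by omega))

/-- Peak positions are 1-based while `Fin n` indices are 0-based: index `a` is position `a + 1`. -/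
lemma strictAntiOn_of_endsDescent_s5 {π : Perm (Fin n)} {a : ℕ} (hdesc : EndsDescent n π)
    (hpeak : ∀ p, a + 2 ≤ p → ¬ IsPeak π p) : StrictAntiOn π {i | a ≤ (i : ℕ)} := by
  obtain ⟨_, hlast⟩ := hdesc
  refine Fin.strictAntiOn_of_succ_lt fun i hi hai => ?_
  induction h : n - 2 - i generalizing i with
  | zero =>
    obtain rfl : i = n - 2 := by omega
    simpa [show n - 2 + 1 = n - 1 by omega] using hlast
  | succ d ih =>
    have hnext := ih (i + 1) (by omega) (by omega) (by omega)
    by_contra hge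
    have hlt : π ⟨i, by omega⟩ < π ⟨i + 1, hi⟩ :=
      (not_lt.1 hge).lt_of_ne (π.injective.ne (Fin.ne_of_val_ne (by simp)))
    exact hpeak (i + 2) (by omega) ⟨⟨by omega, by omega⟩, hlt, hnext⟩

section PrefixPattern

def HasPrefixPattern (hk : k ≤ n) (π : Perm (Fin n)) (σ : Perm (Fin k)) : Prop :=
  ∀ i j : Fin k, π (Fin.castLE hk i) < π (Fin.castLE hk j) ↔ σ i < σ j

lemma HasPrefixPattern.isPeak_iff {hk : k ≤ n} {π : Perm (Fin n)} {σ : Perm (Fin k)}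
    (h : HasPrefixPattern hk π σ) (p : ℕ) : IsPeak σ p ↔ IsPeak π p ∧ p < k := by
  constructor
  · rintro ⟨⟨hp1, hpk⟩, hl, hr⟩
    exact ⟨⟨⟨hp1, by omega⟩, (h _ _).2 hl, (h _ _).2 hr⟩, hpk⟩
  · rintro ⟨⟨⟨hp1, _⟩, hl, hr⟩, hpk⟩
    exact ⟨⟨hp1, hpk⟩, (h ⟨p - 2, by omega⟩ ⟨p - 1, by omega⟩).1 hl,
      (h ⟨p, hpk⟩ ⟨p - 1, by omega⟩).1 hr⟩

lemma card_compl_of_card_eq {T : Finset (Fin n)} (hT : T.card = k) : Tᶜ.card = n - k := by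
  rw [Finset.card_compl, Fintype.card_fin, hT]

def fillFun (T : Finset (Fin n)) (hT : T.card = k) (σ : Perm (Fin k)) (i : Fin n) : Fin n :=
  if h : (i : ℕ) < k then T.orderEmbOfFin hT (σ ⟨i, h⟩)
  else Tᶜ.orderEmbOfFin (card_compl_of_card_eq hT) ⟨n - 1 - i, by omega⟩

lemma fillFun_injective (T : Finset (Fin n)) (hT : T.card = k) (σ : Perm (Fin k)) :
    Function.Injective (fillFun T hT σ) := by
  refine Function.Injective.dite (fun i : Fin n => (i : ℕ) < k)
    (f := fun i => T.orderEmbOfFin hT (σ ⟨i.1, i.2⟩))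
    (f' := fun i => Tᶜ.orderEmbOfFin (card_compl_of_card_eq hT) ⟨n - 1 - i.1, by omega⟩)
    ?_ ?_ ?_
  · intro i j hij
    simp only [EmbeddingLike.apply_eq_iff_eq, Fin.mk.injEq] at hij
    exact Subtype.ext (Fin.ext hij)
  · intro i j hij
    simp only [EmbeddingLike.apply_eq_iff_eq, Fin.mk.injEq] at hij
    have := i.1.isLt
    have := j.1.isLt
    exact Subtype.ext (Fin.ext (by omega))
  · intro i j hi hj hij
    have hmem := Finset.orderEmbOfFin_mem Tᶜ (card_compl_of_card_eq hT) ⟨n - 1 - j, by omega⟩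
    rw [← hij, Finset.mem_compl] at hmem
    exact hmem (Finset.orderEmbOfFin_mem T hT _)

noncomputable def fill (T : Finset (Fin n)) (hT : T.card = k) (σ : Perm (Fin k)) :
    Perm (Fin n) :=
  Equiv.ofBijective _ (Finite.injective_iff_bijective.mp (fillFun_injective T hT σ))

variable {T : Finset (Fin n)} (hT : T.card = k) (σ : Perm (Fin k))

lemma fill_apply_of_lt {i : Fin n} (hi : (i : ℕ) < k) :
    fill T hT σ i = T.orderEmbOfFin hT (σ ⟨i, hi⟩) :=
  dif_pos hi

lemma fill_apply_of_le {i : Fin n} (hi : k ≤ (i : ℕ)) :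
    fill T hT σ i = Tᶜ.orderEmbOfFin (card_compl_of_card_eq hT) ⟨n - 1 - i, by omega⟩ :=
  dif_neg (by omega)

lemma hasPrefixPattern_fill (hk : k ≤ n) : HasPrefixPattern hk (fill T hT σ) σ := by
  intro i j
  rw [fill_apply_of_lt hT σ i.isLt, fill_apply_of_lt hT σ j.isLt, OrderEmbedding.lt_iff_lt]
  rfl

lemma strictAntiOn_fill : StrictAntiOn (fill T hT σ) {i | k ≤ (i : ℕ)} := by
  intro i (hi : k ≤ (i : ℕ)) j (hj : k ≤ (j : ℕ)) hij
  rw [fill_apply_of_le hT σ hi, fill_apply_of_le hT σ hj]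
  exact (Tᶜ.orderEmbOfFin _).strictMono (Fin.mk_lt_mk.2 (by omega))

end PrefixPattern

section Standardization

variable (hk : k ≤ n) (π : Perm (Fin n))

def prefixImage : Finset (Fin n) :=
  Finset.univ.map ((Fin.castLEEmb hk).trans π.toEmbedding)

lemma card_prefixImage : (prefixImage hk π).card = k := by
  simp [prefixImage]

lemma mem_prefixImage (i : Fin k) : π (Fin.castLE hk i) ∈ prefixImage hk π :=
  Finset.mem_map_of_mem _ (Finset.mem_univ i)

/-- The standardization of the first `k` entries of `π`. -/
noncomputable def prefixStd : Perm (Fin k) :=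
  Equiv.ofBijective
    (fun i => ((prefixImage hk π).orderIsoOfFin (card_prefixImage hk π)).symm
      ⟨π (Fin.castLE hk i), mem_prefixImage hk π i⟩)
    (Finite.injective_iff_bijective.mp fun i j hij => by
      simpa using (OrderIso.injective _ hij))

lemma orderEmbOfFin_prefixStd (i : Fin k) :
    (prefixImage hk π).orderEmbOfFin (card_prefixImage hk π) (prefixStd hk π i) =
      π (Fin.castLE hk i) := by
  rw [← Finset.coe_orderIsoOfFin_apply]
  simp [prefixStd]

lemma fill_prefixStd (hπ : StrictAntiOn π {i | k ≤ (i : ℕ)}) :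
    fill (prefixImage hk π) (card_prefixImage hk π) (prefixStd hk π) = π := by
  set T := prefixImage hk π
  have hsuffix : (fun x : Fin (n - k) => π ⟨n - 1 - x, by omega⟩) =
      Tᶜ.orderEmbOfFin (card_compl_of_card_eq (card_prefixImage hk π)) := by
    refine Finset.orderEmbOfFin_unique _ (fun x => Finset.mem_compl.2 fun hx => ?_)
      fun x y hxy => hπ (show k ≤ n - 1 - (y : ℕ) by omega)
        (show k ≤ n - 1 - (x : ℕ) by omega) (Fin.mk_lt_mk.2 (by omega))
    obtain ⟨i, -, hi⟩ := Finset.mem_map.1 hx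
    have := congrArg Fin.val (π.injective hi)
    simp only [Fin.castLEEmb_apply, Fin.val_castLE] at this
    omega
  ext i
  by_cases hi : (i : ℕ) < k
  · rw [fill_apply_of_lt _ _ hi, orderEmbOfFin_prefixStd]
    rfl
  · rw [fill_apply_of_le _ _ (not_lt.1 hi), ← hsuffix]
    simp only
    congr
    omega

lemma prefixImage_fill {T : Finset (Fin n)} (hT : T.card = k) (σ : Perm (Fin k)) :
    prefixImage hk (fill T hT σ) = T := by
  refine Finset.eq_of_subset_of_card_le ?_ (by rw [card_prefixImage, hT])
  intro x hx
  obtain ⟨i, -, rfl⟩ := Finset.mem_map.1 hx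
  simp only [Function.Embedding.trans_apply, Fin.castLEEmb_apply, Equiv.coe_toEmbedding]
  rw [fill_apply_of_lt hT σ (by simp)]
  exact Finset.orderEmbOfFin_mem T hT _

end Standardization

lemma fill_injective (hk : k ≤ n) :
    Function.Injective fun x : {T : Finset (Fin n) // T.card = k} × Perm (Fin k) =>
      fill x.1.1 x.1.2 x.2 := by
  rintro ⟨⟨T, hT⟩, σ⟩ ⟨⟨T', hT'⟩, σ'⟩ h
  simp only at h
  obtain rfl : T = T' := by
    rw [← prefixImage_fill hk hT σ, ← prefixImage_fill hk hT' σ', h]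
  obtain rfl : σ = σ' := by
    ext i
    have := DFunLike.congr_fun h (Fin.castLE hk i)
    rw [fill_apply_of_lt hT σ i.isLt, fill_apply_of_lt hT' σ' i.isLt] at this
    exact congrArg Fin.val ((T.orderEmbOfFin hT).injective this)
  rfl

/-- The set `D(k, S)`. -/
def peakSetEqAntiFrom (n k : ℕ) (S : Finset ℕ) : Set (Perm (Fin n)) :=
  {π | (∀ p, IsPeak π p ∧ p < k ↔ p ∈ S) ∧ StrictAntiOn π {i | k ≤ (i : ℕ)}}

lemma ncard_peakSetEqAntiFrom (hk : k ≤ n) (S : Finset ℕ) :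
    (peakSetEqAntiFrom n k S).ncard = n.choose k * (peakSetEq k S).ncard := by
  have himage : peakSetEqAntiFrom n k S =
      (fun x : {T : Finset (Fin n) // T.card = k} × Perm (Fin k) => fill x.1.1 x.1.2 x.2) ''
        (Set.univ ×ˢ peakSetEq k S) := by
    ext π
    constructor
    · rintro ⟨hpeak, hanti⟩
      have hpat := hasPrefixPattern_fill (card_prefixImage hk π) (prefixStd hk π) hk
      rw [fill_prefixStd hk π hanti] at hpat
      refine ⟨(⟨prefixImage hk π, card_prefixImage hk π⟩, prefixStd hk π), ⟨trivial, fun p => ?_⟩,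
        fill_prefixStd hk π hanti⟩
      rw [hpat.isPeak_iff, hpeak]
    · rintro ⟨⟨⟨T, hT⟩, σ⟩, ⟨-, hσ⟩, rfl⟩
      exact ⟨fun p => by rw [← (hasPrefixPattern_fill hT σ hk).isPeak_iff, hσ],
        strictAntiOn_fill hT σ⟩
  rw [himage, Set.ncard_image_of_injective _ (fill_injective hk), Set.ncard_prod, Set.ncard_univ,
    Nat.card_eq_fintype_card, Fintype.card_finset_len, Fintype.card_fin]

section Decomposition

variable {S₁ : Finset ℕ} {π : Perm (Fin n)}

lemma endsDescent_of_mem_peakSetEqAntiFrom (hkn : k + 2 ≤ n)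
    (hπ : π ∈ peakSetEqAntiFrom n k S₁) : EndsDescent n π :=
  ⟨by omega, hπ.2 (show k ≤ n - 2 by omega) (show k ≤ n - 1 by omega) (Fin.mk_lt_mk.2 (by omega))⟩

lemma isPeak_iff_of_mem_peakSetEqAntiFrom (hS₁ : ∀ p ∈ S₁, p < k)
    (hπ : π ∈ peakSetEqAntiFrom n k S₁) {p : ℕ} (hpk : p ≠ k) (hpk' : p ≠ k + 1) :
    IsPeak π p ↔ p ∈ S₁ := by
  rcases lt_or_gt_of_ne hpk with hlt | hgt
  · rw [← hπ.1 p, and_iff_left hlt]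
  · refine ⟨fun ⟨_, hl, _⟩ => ?_, fun h => absurd (hS₁ p h) (by omega)⟩
    exact absurd hl (lt_asymm (hπ.2 (show k ≤ p - 2 by omega) (show k ≤ p - 1 by omega)
      (Fin.mk_lt_mk.2 (by omega))))

lemma mem_peakSetEq_of_mem_peakSetEqAntiFrom (hS₁ : ∀ p ∈ S₁, p < k)
    (hπ : π ∈ peakSetEqAntiFrom n k S₁) :
    π ∈ peakSetEq n S₁ ∨ π ∈ peakSetEq n (insert k S₁) ∨ π ∈ peakSetEq n (insert (k + 1) S₁) := by
  have hpeak : ∀ p, IsPeak π p ↔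
      p ∈ S₁ ∨ (p = k ∧ IsPeak π k) ∨ (p = k + 1 ∧ IsPeak π (k + 1)) := by
    intro p
    by_cases hpk : p = k
    · subst hpk; have := hS₁ p; grind
    by_cases hpk' : p = k + 1
    · subst hpk'; have := hS₁ (k + 1); grind
    rw [isPeak_iff_of_mem_peakSetEqAntiFrom hS₁ hπ hpk hpk']
    grind
  by_cases h₀ : IsPeak π k <;> by_cases h₁ : IsPeak π (k + 1)
  · exact absurd h₁ h₀.not_isPeak_succ_s5
  · exact Or.inr (Or.inl fun p => by rw [hpeak p, Finset.mem_insert]; tauto)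
  · exact Or.inr (Or.inr fun p => by rw [hpeak p, Finset.mem_insert]; tauto)
  · exact Or.inl fun p => by rw [hpeak p]; tauto

lemma underlineP_subset_peakSetEqAntiFrom {S : Finset ℕ} (hS : ∀ p ∈ S, p ≤ k + 1)
    (hS₁ : ∀ p, p < k → (p ∈ S ↔ p ∈ S₁)) (hS₁k : ∀ p ∈ S₁, p < k) :
    underlineP n S ⊆ peakSetEqAntiFrom n k S₁ := by
  rintro π ⟨hpeak, hdesc⟩
  refine ⟨fun p => ?_, strictAntiOn_of_endsDescent_s5 hdesc fun p hp h => ?_⟩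
  · rw [hpeak p]
    have := hS₁ p
    have := hS₁k p
    tauto
  · have := hS p ((hpeak p).1 h)
    omega

lemma peakSetEqAntiFrom_eq_union (hkn : k + 2 ≤ n) (hS₁ : ∀ p ∈ S₁, p < k) :
    peakSetEqAntiFrom n k S₁ =
      underlineP n S₁ ∪ underlineP n (insert k S₁) ∪ underlineP n (insert (k + 1) S₁) := by
  refine subset_antisymm (fun π hπ => ?_) (Set.union_subset (Set.union_subset ?_ ?_) ?_)
  · have hdesc := endsDescent_of_mem_peakSetEqAntiFrom hkn hπ
    rcases mem_peakSetEq_of_mem_peakSetEqAntiFrom hS₁ hπ with h | h | h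
    · exact Or.inl (Or.inl ⟨h, hdesc⟩)
    · exact Or.inl (Or.inr ⟨h, hdesc⟩)
    · exact Or.inr ⟨h, hdesc⟩
  all_goals refine underlineP_subset_peakSetEqAntiFrom ?_ (fun p hp => ?_) hS₁
  all_goals grind

end Decomposition

lemma ncard_underlineP_add_ncard_underlineP_add_ncard_underlineP (hkn : k + 2 ≤ n) {S₁ : Finset ℕ}
    (hS₁ : ∀ p ∈ S₁, p < k) :
    (underlineP n S₁).ncard + (underlineP n (insert k S₁)).ncard +
      (underlineP n (insert (k + 1) S₁)).ncard = n.choose k * (peakSetEq k S₁).ncard := by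
  have hk : k ∉ S₁ := fun h => (hS₁ k h).false
  have hk' : k + 1 ∉ S₁ := fun h => by have := hS₁ _ h; omega
  have disjoint {S T : Finset ℕ} (h : S ≠ T) : Disjoint (underlineP n S) (underlineP n T) :=
    (peakSetEq_disjoint h).mono (fun _ h => h.1) (fun _ h => h.1)
  rw [← ncard_peakSetEqAntiFrom (by omega), peakSetEqAntiFrom_eq_union hkn hS₁,
    Set.ncard_union_eq, Set.ncard_union_eq]
  · exact disjoint (Finset.insert_ne_self.2 hk).symm
  · refine Set.disjoint_union_left.2 ⟨disjoint (Finset.insert_ne_self.2 hk').symm, disjoint ?_⟩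
    intro h
    have := h ▸ Finset.mem_insert_self (k + 1) S₁
    simp [hk'] at this

end

theorem stmt5_general (n : ℕ) (S S₁ S₂ : Finset ℕ) (hS : S.Nonempty)
    (hadm : (peakSetEq n S).Nonempty)
    (m : ℕ) (hm : m = S.max' hS) (hS₁ : S₁ = S.erase m) (hS₂ : S₂ = insert (m - 1) S₁) :
    ((underlineP n S).ncard : ℤ) =
      (n.choose (m - 1) : ℤ) * ((peakSetEq (m - 1) S₁).ncard : ℤ)
        - ((underlineP n S₁).ncard : ℤ) - ((underlineP n S₂).ncard : ℤ) := by
  obtain ⟨π, hπ⟩ := hadm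
  have hmS : m ∈ S := hm ▸ S.max'_mem hS
  have hpeak_m : IsPeak π m := (hπ m).2 hmS
  have ⟨⟨hm1, hmn⟩, _⟩ := hpeak_m
  have hS₁_lt : ∀ p ∈ S₁, p < m - 1 := by
    intro p hp
    obtain ⟨hpm, hpS⟩ := Finset.mem_erase.1 (hS₁ ▸ hp)
    have hle : p ≤ m := hm ▸ S.le_max' p hpS
    have hsucc : p + 1 ≠ m := fun h => ((hπ p).2 hpS).not_isPeak_succ_s5 (h ▸ hpeak_m)
    omega
  have hS_eq : S = insert (m - 1 + 1) S₁ := by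
    rw [Nat.sub_add_cancel (by omega), hS₁, Finset.insert_erase hmS]
  have key := ncard_underlineP_add_ncard_underlineP_add_ncard_underlineP
    (n := n) (k := m - 1) (by omega) hS₁_lt
  rw [← hS_eq, ← hS₂] at key
  rw [← Nat.cast_mul, ← key]
  push_cast
  ring

theorem stmt5 (n : ℕ) (S S₁ S₂ : Finset ℕ) (hS : S.Nonempty)
    (hSsub : ∀ x ∈ S, 0 < x ∧ x < n) (hadm : (peakSetEq n S).Nonempty)
    (m : ℕ) (hm : m = S.max' hS) (hS₁ : S₁ = S.erase m) (hS₂ : S₂ = insert (m - 1) S₁) :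
    ((underlineP n S).ncard : ℤ) =
      (n.choose (m - 1) : ℤ) * ((peakSetEq (m - 1) S₁).ncard : ℤ)
        - ((underlineP n S₁).ncard : ℤ) - ((underlineP n S₂).ncard : ℤ) :=
  stmt5_general n S S₁ S₂ hS hadm m hm hS₁ hS₂
end

section
/- For every n ≥ 1 there exists a bijection θ from the group 𝒞_n of type C_n mirrored permutations to the group ℬ_n of signed permutations on n letters such that for every S ⊆ {2,3,…,n}, setting R = {n−i+1 : i ∈ S}, θ maps hat{P}_C(S;n) bijectively onto hat{P}_B(R;n). -/
open Equiv

/-!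
Recentre the values `1, …, 2n` of a mirrored permutation `τ` to `-n, …, -1, 1, …, n`, keeping
their order; the mirror symmetry becomes `c(τ_{2n+1-i}) = -c(τ_i)`, so `τ` is determined by its
first half, whose recentred entries form a signed permutation. Take
`θ(τ) = (c(τ_n), …, c(τ_1))`. Reversal moves a peak at `i` to `n + 1 - i`, and the entry
`τ_{n+1}` becomes `-c(τ_n)`, which compares with `c(τ_n)` exactly as `0` does; this is why the
prefix `0` of `θ(τ)` accounts for the entry `τ_{n+1}`.
-/

namespace MirroredPeaks

/-- Order-preserving bijection from the 0-based values `0, …, 2n-1` onto `-n, …, -1, 1, …, n`;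
it turns the mirror symmetry `v ↦ 2n-1-v` into negation. -/
def centre (n v : ℕ) : ℤ := if n ≤ v then v - n + 1 else v - n

def uncentre (n : ℕ) (b : ℤ) : ℕ := if 0 < b then (b + n - 1).toNat else (b + n).toNat

section centre

variable {n v w : ℕ}

lemma strictMono_centre : StrictMono (centre n) := fun v w h => by
  unfold centre; split_ifs <;> omega

lemma centre_pos : 0 < centre n v ↔ n ≤ v := by
  unfold centre; split_ifs <;> omega

lemma centre_two_mul_sub (hv : v < 2 * n) : centre n (2 * n - 1 - v) = -centre n v := by
  unfold centre; split_ifs <;> omega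

lemma one_le_abs_centre : 1 ≤ |centre n v| := by
  rw [le_abs]; unfold centre; split_ifs <;> omega

lemma abs_centre_le (hv : v < 2 * n) : |centre n v| ≤ n := by
  rw [abs_le]; unfold centre; split_ifs <;> omega

lemma eq_or_add_eq_of_abs_centre_eq (hw : w < 2 * n) (h : |centre n v| = |centre n w|) :
    v = w ∨ v + w = 2 * n - 1 := by
  rcases abs_eq_abs.mp h with h | h
  · exact .inl (strictMono_centre.injective h)
  · rw [← centre_two_mul_sub hw] at h
    have := strictMono_centre.injective h
    omega

lemma uncentre_lt {b : ℤ} (h1 : 1 ≤ |b|) (h2 : |b| ≤ n) : uncentre n b < 2 * n := by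
  rw [le_abs] at h1; rw [abs_le] at h2; unfold uncentre; split_ifs <;> omega

lemma centre_uncentre {b : ℤ} (h1 : 1 ≤ |b|) (h2 : |b| ≤ n) :
    centre n (uncentre n b) = b := by
  rw [le_abs] at h1; rw [abs_le] at h2; unfold centre uncentre; split_ifs <;> omega

end centre

def word {m : ℕ} (τ : Perm (Fin m)) (a : ℕ) : ℕ := if h : a < m then τ ⟨a, h⟩ else 0

section word

variable {m : ℕ} (τ : Perm (Fin m)) {a b : ℕ}

lemma word_of_lt (h : a < m) : word τ a = τ ⟨a, h⟩ := dif_pos h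

lemma word_lt (h : a < m) : word τ a < m := by
  rw [word_of_lt τ h]; exact Fin.isLt _

lemma eq_of_word_eq (ha : a < m) (hb : b < m) (h : word τ a = word τ b) : a = b := by
  rw [word_of_lt τ ha, word_of_lt τ hb] at h
  simpa using τ.injective (Fin.ext h)

end word

lemma word_two_mul_sub {n a : ℕ} {τ : Perm (Fin (2 * n))} (hτ : τ ∈ mirroredC n)
    (ha : a < 2 * n) :
    word τ (2 * n - 1 - a) = 2 * n - 1 - word τ a := by
  have hrev : (⟨2 * n - 1 - a, by omega⟩ : Fin (2 * n)) = Fin.rev ⟨a, ha⟩ := by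
    ext; simp only [Fin.val_rev]; omega
  rw [word_of_lt τ (by omega), word_of_lt τ ha, hrev, hτ, Fin.val_rev]
  omega

lemma mirroredC_ext {n : ℕ} {τ τ' : Perm (Fin (2 * n))} (hτ : τ ∈ mirroredC n)
    (hτ' : τ' ∈ mirroredC n) (h : ∀ a < n, word τ a = word τ' a) : τ = τ' := by
  ext ⟨a, ha⟩
  rw [← word_of_lt τ ha, ← word_of_lt τ' ha]
  rcases lt_or_ge a n with han | han
  · exact h a han
  · have e := h (2 * n - 1 - a) (by omega)
    rw [word_two_mul_sub hτ ha, word_two_mul_sub hτ' ha] at e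
    have := word_lt τ ha; have := word_lt τ' ha
    omega

/-- `θ(τ)_j = centre (τ_{n+1-j})` in 1-based notation. -/
def theta (n : ℕ) (τ : Perm (Fin (2 * n))) : Fin n → ℤ :=
  fun j => centre n (word τ (n - 1 - j))

lemma theta_mem_signedPerms {n : ℕ} {τ : Perm (Fin (2 * n))} (hτ : τ ∈ mirroredC n) :
    theta n τ ∈ SignedPerms n := by
  refine ⟨fun j => ⟨one_le_abs_centre, abs_centre_le (word_lt τ (by omega))⟩, ?_⟩
  intro a b h
  have := a.isLt; have := b.isLt
  rcases eq_or_add_eq_of_abs_centre_eq (word_lt τ (by omega)) h with e | e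
  · have := eq_of_word_eq τ (by omega) (by omega) e
    omega
  · -- `τ` then takes the same value at positions `n-1-b < n` and `n+a ≥ n`,
    -- the mirror image of `n-1-a`
    have e' := word_two_mul_sub hτ (show n - 1 - a < 2 * n by omega)
    have := word_lt τ (show n - 1 - a < 2 * n by omega)
    have := eq_of_word_eq τ (a := n - 1 - b) (b := 2 * n - 1 - (n - 1 - a)) (by omega) (by omega)
      (by change word τ _ + word τ _ = _ at e; omega)
    omega

lemma theta_injOn (n : ℕ) : Set.InjOn (theta n) (mirroredC n) := by
  intro τ hτ τ' hτ' h
  refine mirroredC_ext hτ hτ' fun a ha => (strictMono_centre (n := n)).injective ?_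
  simpa [theta, show n - 1 - (n - 1 - a) = a by omega] using congrFun h ⟨n - 1 - a, by omega⟩

/-- The signed word `β_n, …, β_1, -β_1, …, -β_n`; undoing `centre` on it gives `θ⁻¹ β`. -/
def mirrorExtend {n : ℕ} (β : Fin n → ℤ) (j : Fin (2 * n)) : ℤ :=
  if h : (j : ℕ) < n then β ⟨n - 1 - j, by omega⟩ else -β ⟨j - n, by omega⟩

section mirrorExtend

variable {n : ℕ} {β : Fin n → ℤ}

lemma mirrorExtend_rev (j : Fin (2 * n)) : mirrorExtend β j.rev = -mirrorExtend β j := by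
  have hrev : (j.rev : ℕ) = 2 * n - 1 - j := by rw [Fin.val_rev]; omega
  unfold mirrorExtend
  by_cases h : (j : ℕ) < n
  · rw [dif_neg (by omega), dif_pos h]
    congr 2
    simp only [Fin.mk.injEq]
    omega
  · rw [dif_pos (by omega), dif_neg h, neg_neg]
    congr 1
    simp only [Fin.mk.injEq]
    omega

lemma abs_mirrorExtend_mem (hβ : β ∈ SignedPerms n) (j : Fin (2 * n)) :
    1 ≤ |mirrorExtend β j| ∧ |mirrorExtend β j| ≤ n := by
  unfold mirrorExtend
  split_ifs
  · exact hβ.1 _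
  · rw [abs_neg]; exact hβ.1 _

lemma mirrorExtend_injective (hβ : β ∈ SignedPerms n) :
    Function.Injective (mirrorExtend β) := by
  have habs : ∀ {i i' : Fin n}, |β i| = |β i'| → i = i' := fun h => hβ.2 h
  have hne : ∀ i i' : Fin n, β i ≠ -β i' := by
    intro i i' h
    obtain rfl := habs (i := i) (i' := i') (by rw [h, abs_neg])
    have := (hβ.1 i).1
    rw [le_abs] at this
    omega
  intro j j' h
  unfold mirrorExtend at h
  split_ifs at h with hj hj' hj'
  · have := habs (congrArg abs h); simp only [Fin.mk.injEq] at this; omega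
  · exact absurd h (hne _ _)
  · exact absurd h.symm (hne _ _)
  · have := habs (congrArg abs (neg_inj.mp h)); simp only [Fin.mk.injEq] at this; omega

end mirrorExtend

lemma exists_mirroredC_theta_eq {n : ℕ} {β : Fin n → ℤ} (hβ : β ∈ SignedPerms n) :
    ∃ τ ∈ mirroredC n, theta n τ = β := by
  set f : Fin (2 * n) → Fin (2 * n) := fun j =>
    ⟨uncentre n (mirrorExtend β j), uncentre_lt (abs_mirrorExtend_mem hβ j).1
      (abs_mirrorExtend_mem hβ j).2⟩
  have hcf : ∀ j, centre n (f j) = mirrorExtend β j := fun j =>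
    centre_uncentre (abs_mirrorExtend_mem hβ j).1 (abs_mirrorExtend_mem hβ j).2
  have hinj : Function.Injective f := fun j j' h =>
    mirrorExtend_injective hβ (by rw [← hcf, ← hcf, h])
  set τ := Equiv.ofBijective f (Finite.injective_iff_bijective.mp hinj)
  refine ⟨τ, fun j => Fin.ext ((strictMono_centre (n := n)).injective ?_), funext fun j => ?_⟩
  · change centre n (f j.rev) = centre n (f j).rev
    have := (f j).isLt
    rw [hcf, Fin.val_rev, show 2 * n - ((f j : ℕ) + 1) = 2 * n - 1 - f j by omega,
      centre_two_mul_sub this, hcf, mirrorExtend_rev]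
  · have := j.isLt
    simp only [theta, word_of_lt τ (show n - 1 - (j : ℕ) < 2 * n by omega), τ,
      Equiv.ofBijective_apply, hcf, mirrorExtend]
    simp [show n - 1 - (j : ℕ) < n by omega, show n - 1 - (n - 1 - (j : ℕ)) = j by omega]

lemma isPeakHat_iff {n : ℕ} (τ : Perm (Fin (2 * n))) (i : ℕ) :
    IsPeakHat n τ i ↔ (1 < i ∧ i ≤ n) ∧
      word τ (i - 2) < word τ (i - 1) ∧ word τ i < word τ (i - 1) := by
  constructor <;> rintro ⟨h, h1, h2⟩ <;> refine ⟨h, ?_⟩ <;>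
  · simp only [word_of_lt τ (show i - 2 < 2 * n by omega),
      word_of_lt τ (show i - 1 < 2 * n by omega), word_of_lt τ (show i < 2 * n by omega),
      Fin.lt_def] at h1 h2 ⊢
    exact ⟨h1, h2⟩

lemma isPeakB_theta_iff {n j : ℕ} {τ : Perm (Fin (2 * n))} (hτ : τ ∈ mirroredC n)
    (hj : 1 ≤ j) (hjn : j < n) : IsPeakB n (theta n τ) j ↔ IsPeakHat n τ (n + 1 - j) := by
  rw [isPeakHat_iff]
  simp only [IsPeakB, theta, strictMono_centre.lt_iff_lt, exists_prop, hj, hjn, and_self, true_and,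
    show 1 < n + 1 - j by omega, show n + 1 - j ≤ n by omega]
  rcases (show j = 1 ∨ 2 ≤ j by omega) with rfl | hj2
  · -- the leading `0` of `θ τ` plays the part of `τ_{n+1}`, the mirror image of `τ_n`
    have hmir : word τ n = 2 * n - 1 - word τ (n - 1) := by
      rw [← word_two_mul_sub hτ (show n - 1 < 2 * n by omega)]; congr 1; omega
    have := word_lt τ (show n - 1 < 2 * n by omega)
    simp only [show ¬2 ≤ 1 by omega, dite_false, centre_pos]
    rw [show n - 1 - (1 - 1) = n - 1 by omega, show n - 1 - 1 = n - 2 by omega,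
      show n + 1 - 1 - 2 = n - 2 by omega, show n + 1 - 1 - 1 = n - 1 by omega,
      show n + 1 - 1 = n by omega]
    omega
  · simp only [hj2, dite_true, strictMono_centre.lt_iff_lt]
    rw [show n - 1 - (j - 2) = n + 1 - j by omega, show n - 1 - (j - 1) = n + 1 - j - 1 by omega,
      show n - 1 - j = n + 1 - j - 2 by omega, and_comm]

lemma forall_iff_mem_image_reflect {n : ℕ} {P Q : ℕ → Prop} {S : Finset ℕ}
    (hS : ∀ i ∈ S, 2 ≤ i ∧ i ≤ n) (hP : ∀ j, P j → 1 ≤ j ∧ j < n)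
    (hQ : ∀ i, Q i → 2 ≤ i ∧ i ≤ n)
    (hPQ : ∀ j, 1 ≤ j → j < n → (P j ↔ Q (n + 1 - j))) :
    (∀ i, Q i ↔ i ∈ S) ↔ ∀ j, P j ↔ j ∈ S.image fun i => n - i + 1 := by
  have hmem : ∀ j, j ∈ S.image (fun i => n - i + 1) ↔ 1 ≤ j ∧ j < n ∧ n + 1 - j ∈ S := by
    intro j
    simp only [Finset.mem_image]
    constructor
    · rintro ⟨i, hi, rfl⟩
      have := hS i hi
      exact ⟨by omega, by omega, by rwa [show n + 1 - (n - i + 1) = i by omega]⟩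
    · rintro ⟨-, -, h⟩
      exact ⟨_, h, by have := hS _ h; omega⟩
  constructor
  · intro h j
    rw [hmem]
    by_cases hj : 1 ≤ j ∧ j < n
    · rw [hPQ j hj.1 hj.2, h]
      exact ⟨fun hs => ⟨hj.1, hj.2, hs⟩, fun hs => hs.2.2⟩
    · exact iff_of_false (fun hp => hj (hP j hp)) fun hs => hj ⟨hs.1, hs.2.1⟩
  · intro h i
    by_cases hi : 2 ≤ i ∧ i ≤ n
    · have e : n + 1 - (n + 1 - i) = i := by omega
      rw [← e, ← hPQ _ (by omega) (by omega), h, hmem, e]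
      exact ⟨fun hs => hs.2.2, fun hs => ⟨by omega, by omega, hs⟩⟩
    · exact iff_of_false (fun hq => hi (hQ i hq)) fun hs => hi (hS i hs)

lemma mem_hatPC_iff {n : ℕ} {S : Finset ℕ} (hS : ∀ i ∈ S, 2 ≤ i ∧ i ≤ n)
    {τ : Perm (Fin (2 * n))} (hτ : τ ∈ mirroredC n) :
    τ ∈ hatPC n S ↔ theta n τ ∈ hatPB n (S.image fun i => n - i + 1) := by
  have hpeaks := forall_iff_mem_image_reflect hS (fun j ⟨h, _⟩ => h) (fun i ⟨h, _⟩ => h)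
    (fun j hj hjn => isPeakB_theta_iff hτ hj hjn)
  exact ⟨fun h => ⟨theta_mem_signedPerms hτ, hpeaks.1 h.2⟩,
    fun h => ⟨hτ, hpeaks.2 h.2⟩⟩

lemma bijOn_theta (n : ℕ) : Set.BijOn (theta n) (mirroredC n) (SignedPerms n) :=
  ⟨fun _ hτ => theta_mem_signedPerms hτ, theta_injOn n,
    fun _ hβ => exists_mirroredC_theta_eq hβ⟩

lemma bijOn_theta_hatPC {n : ℕ} {S : Finset ℕ} (hS : ∀ i ∈ S, 2 ≤ i ∧ i ≤ n) :
    Set.BijOn (theta n) (hatPC n S) (hatPB n (S.image fun i => n - i + 1)) := by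
  have hpre : hatPC n S = mirroredC n ∩ theta n ⁻¹' hatPB n (S.image fun i => n - i + 1) :=
    Set.ext fun τ => ⟨fun h => ⟨h.1, (mem_hatPC_iff hS h.1).1 h⟩,
      fun h => (mem_hatPC_iff hS h.1).2 h.2⟩
  rw [hpre]
  exact (bijOn_theta n).subset_right fun _ hβ => hβ.1

end MirroredPeaks

theorem stmt10_general (n : ℕ) :
    ∃ θ : Equiv.Perm (Fin (2 * n)) → (Fin n → ℤ),
      Set.BijOn θ (mirroredC n) (SignedPerms n) ∧
      ∀ S : Finset ℕ, (∀ i ∈ S, 2 ≤ i ∧ i ≤ n) →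
        Set.BijOn θ (hatPC n S) (hatPB n (S.image fun i => n - i + 1)) :=
  ⟨MirroredPeaks.theta n, MirroredPeaks.bijOn_theta n,
    fun _ hS => MirroredPeaks.bijOn_theta_hatPC hS⟩

theorem stmt10 (n : ℕ) (hn : 1 ≤ n) :
    ∃ θ : Equiv.Perm (Fin (2 * n)) → (Fin n → ℤ),
      Set.BijOn θ (mirroredC n) (SignedPerms n) ∧
      ∀ S : Finset ℕ, (∀ i ∈ S, 2 ≤ i ∧ i ≤ n) →
        Set.BijOn θ (hatPC n S) (hatPB n (S.image fun i => n - i + 1)) :=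
  stmt10_general n
end

section
/- For every n ≥ 2 and every S ⊆ {1,…,n−1}, the number of type C_n mirrored permutations whose first n entries have peak set S equals 2^n times the number of permutations in S_n with peak set S: |P_C(S;n)| = 2^n · |P(S;n)|. Consequently, if p is a polynomial with |P(S;n)| = p(n)·2^{n−|S|−1}, then |P_C(S;n)| = p(n)·2^{2n−|S|−1}. -/
open Equiv

/-!
A mirrored permutation `τ` is determined by its first `n` entries. Their value set contains
exactly one value of each mirror pair `{v, 2n + 1 - v}`, so it is fixed by the set `H ⊆ [n]` of
pairs from which the larger value is taken, and once the value set is fixed the entries are its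
increasing enumeration composed with a unique `π ∈ S_n`, which has the same peaks. Hence
`(π, H) ↦ τ` is a bijection `S_n × 2^[n] → 𝒞_n` carrying `P(S;n) × 2^[n]` onto `P_C(S;n)`.
-/

open Finset

theorem Finset.exists_perm_eq_orderEmbOfFin_comp {α : Type*} [LinearOrder α] {s : Finset α}
    {m : ℕ} (h : s.card = m) {f : Fin m → α} (hf : Function.Injective f) (hfs : ∀ i, f i ∈ s) :
    ∃ σ : Equiv.Perm (Fin m), ∀ i, f i = s.orderEmbOfFin h (σ i) := by
  let g : Fin m → Fin m := fun i => (s.orderIsoOfFin h).symm ⟨f i, hfs i⟩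
  have hg : Function.Injective g := fun _ j hij =>
    hf (congrArg Subtype.val ((s.orderIsoOfFin h).symm.injective hij))
  refine ⟨Equiv.ofBijective g (Finite.injective_iff_bijective.1 hg), fun i => ?_⟩
  rw [Equiv.ofBijective_apply, ← coe_orderIsoOfFin_apply, OrderIso.apply_symm_apply]

namespace TypeC

variable {n : ℕ}

abbrev IsLow (x : Fin (2 * n)) : Prop := (x : ℕ) < n

def low (c : Fin n) : Fin (2 * n) := Fin.castLE (by omega) c

/-- The index in `Fin n` of the mirror pair `{x, x.rev}`. -/
def fold (x : Fin (2 * n)) : Fin n := ⟨min x x.rev, by have := x.isLt; simp [Fin.val_rev]; omega⟩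

lemma isLow_low (c : Fin n) : IsLow (low c) := c.isLt

lemma isLow_rev {x : Fin (2 * n)} : IsLow x.rev ↔ ¬ IsLow x := by
  have := x.isLt; simp only [IsLow, Fin.val_rev]; omega

lemma fold_low (c : Fin n) : fold (low c) = c := by
  ext; have := c.isLt; simp [fold, low, Fin.val_rev]; omega

lemma fold_rev (x : Fin (2 * n)) : fold x.rev = fold x := by
  simp [fold, Fin.rev_rev, min_comm]

lemma low_fold {x : Fin (2 * n)} (hx : IsLow x) : low (fold x) = x := by
  ext; simp [fold, low, Fin.val_rev] at hx ⊢; omega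

lemma low_fold_of_not_isLow {x : Fin (2 * n)} (hx : ¬ IsLow x) : low (fold x) = x.rev := by
  rw [← fold_rev, low_fold (isLow_rev.2 hx)]

lemma eq_of_fold_eq {x y : Fin (2 * n)} (h : fold x = fold y) (hxy : IsLow x ↔ IsLow y) :
    x = y := by
  by_cases hx : IsLow x
  · rw [← low_fold hx, ← low_fold (hxy.1 hx), h]
  · rw [← Fin.rev_rev x, ← Fin.rev_rev y, ← low_fold_of_not_isLow hx,
      ← low_fold_of_not_isLow (hx ∘ hxy.2), h]

def IsTransversal (A : Finset (Fin (2 * n))) : Prop := ∀ x, x ∈ A ↔ x.rev ∉ A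

lemma IsTransversal.card_eq {A : Finset (Fin (2 * n))} (hA : IsTransversal A) : A.card = n := by
  have hcompl : Aᶜ = A.map Fin.revPerm.toEmbedding := by
    ext x
    rw [mem_compl, mem_map_equiv, Fin.revPerm_symm, Fin.revPerm_apply, hA, not_not]
  have := card_compl A
  rw [hcompl, card_map, Fintype.card_fin] at this
  omega

/-- Takes the upper element of the mirror pairs indexed by `H` and the lower one of the others. -/
def transversal (H : Finset (Fin n)) : Finset (Fin (2 * n)) :=
  univ.filter fun x => (IsLow x ↔ fold x ∉ H)

def flipped (A : Finset (Fin (2 * n))) : Finset (Fin n) := univ.filter fun c => low c ∉ A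

lemma isTransversal_transversal (H : Finset (Fin n)) : IsTransversal (transversal H) := by
  intro x
  simp only [transversal, mem_filter, mem_univ, true_and, isLow_rev, fold_rev]
  tauto

lemma flipped_transversal (H : Finset (Fin n)) : flipped (transversal H) = H := by
  ext c
  simp [flipped, transversal, isLow_low, fold_low]

lemma transversal_flipped {A : Finset (Fin (2 * n))} (hA : IsTransversal A) :
    transversal (flipped A) = A := by
  ext x
  simp only [transversal, flipped, mem_filter, mem_univ, true_and, not_not]
  by_cases hx : IsLow x
  · simp [hx, low_fold hx]
  · simpa [hx, low_fold_of_not_isLow hx] using (hA x).symm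

lemma IsTransversal.eq_of_subset {A B : Finset (Fin (2 * n))} (hA : IsTransversal A)
    (hB : IsTransversal B) (hAB : A ⊆ B) : A = B := by
  refine hAB.antisymm fun x hx => ?_
  by_contra hxA
  exact (hB x).1 hx (hAB (not_not.1 (mt (hA x).2 hxA)))

def mirrorExtend (f : Fin n → Fin (2 * n)) (x : Fin (2 * n)) : Fin (2 * n) :=
  if IsLow x then f (fold x) else (f (fold x)).rev

lemma mirrorExtend_low (f : Fin n → Fin (2 * n)) (c : Fin n) : mirrorExtend f (low c) = f c := by
  simp [mirrorExtend, isLow_low, fold_low]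

lemma mirrorExtend_rev (f : Fin n → Fin (2 * n)) (x : Fin (2 * n)) :
    mirrorExtend f x.rev = (mirrorExtend f x).rev := by
  have hrev := isLow_rev (x := x)
  by_cases hx : IsLow x
  · rw [mirrorExtend, mirrorExtend, if_neg (by tauto), if_pos hx, fold_rev]
  · rw [mirrorExtend, mirrorExtend, if_pos (by tauto), if_neg hx, fold_rev, Fin.rev_rev]

lemma mirrorExtend_injective {f : Fin n → Fin (2 * n)} (hf : Function.Injective f)
    (hrev : ∀ i j, f i ≠ (f j).rev) : Function.Injective (mirrorExtend f) := by
  intro x y hxy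
  by_cases hx : IsLow x <;> by_cases hy : IsLow y <;>
    simp only [mirrorExtend, hx, hy, if_true, if_false, Fin.rev_inj] at hxy
  · exact eq_of_fold_eq (hf hxy) (iff_of_true hx hy)
  · exact absurd hxy (hrev _ _)
  · exact absurd hxy.symm (hrev _ _)
  · exact eq_of_fold_eq (hf hxy) (iff_of_false hx hy)

lemma eq_of_mem_mirroredC {τ τ' : Equiv.Perm (Fin (2 * n))} (hτ : τ ∈ mirroredC n)
    (hτ' : τ' ∈ mirroredC n) (h : ∀ c, τ (low c) = τ' (low c)) : τ = τ' := by
  ext1 x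
  by_cases hx : IsLow x
  · rw [← low_fold hx, h]
  · rw [← Fin.rev_rev x, ← low_fold_of_not_isLow hx, hτ, hτ', h]

noncomputable def mirroredOf (π : Equiv.Perm (Fin n)) (H : Finset (Fin n)) :
    Equiv.Perm (Fin (2 * n)) :=
  let f := (transversal H).orderEmbOfFin (isTransversal_transversal H).card_eq ∘ π
  have hf : Function.Injective f := (orderEmbOfFin _ _).injective.comp π.injective
  have hrev : ∀ i j, f i ≠ (f j).rev := fun _ j hij =>
    (isTransversal_transversal H (f j)).1 (orderEmbOfFin_mem _ _ _) (hij ▸ orderEmbOfFin_mem _ _ _)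
  Equiv.ofBijective (mirrorExtend f)
    (Finite.injective_iff_bijective.1 (mirrorExtend_injective hf hrev))

lemma mirroredOf_low (π : Equiv.Perm (Fin n)) (H : Finset (Fin n)) (c : Fin n) :
    mirroredOf π H (low c) =
      (transversal H).orderEmbOfFin (isTransversal_transversal H).card_eq (π c) :=
  mirrorExtend_low _ c

lemma mirroredOf_mem_mirroredC (π : Equiv.Perm (Fin n)) (H : Finset (Fin n)) :
    mirroredOf π H ∈ mirroredC n :=
  mirrorExtend_rev _

lemma isPeakFirst_iff_isPeak {τ : Equiv.Perm (Fin (2 * n))} {π : Equiv.Perm (Fin n)}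
    (h : ∀ a b, τ (low a) < τ (low b) ↔ π a < π b) (i : ℕ) :
    IsPeakFirst n τ i ↔ IsPeak π i :=
  exists_congr fun _ => and_congr (h ⟨i - 2, by omega⟩ ⟨i - 1, by omega⟩)
    (h ⟨i, by omega⟩ ⟨i - 1, by omega⟩)

lemma isPeakFirst_mirroredOf (π : Equiv.Perm (Fin n)) (H : Finset (Fin n)) (i : ℕ) :
    IsPeakFirst n (mirroredOf π H) i ↔ IsPeak π i :=
  isPeakFirst_iff_isPeak
    (fun a b => by rw [mirroredOf_low, mirroredOf_low, OrderEmbedding.lt_iff_lt]) i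

lemma mirroredOf_injective :
    Function.Injective fun p : Equiv.Perm (Fin n) × Finset (Fin n) => mirroredOf p.1 p.2 := by
  rintro ⟨π, H⟩ ⟨π', H'⟩ h
  simp only at h
  have hT : transversal H = transversal H' := by
    refine (isTransversal_transversal H).eq_of_subset (isTransversal_transversal H') fun x hx => ?_
    obtain ⟨k, rfl⟩ : x ∈ Set.range
        ((transversal H).orderEmbOfFin (isTransversal_transversal H).card_eq) := by
      rwa [range_orderEmbOfFin]
    rw [← π.apply_symm_apply k, ← mirroredOf_low, h, mirroredOf_low]
    exact orderEmbOfFin_mem _ _ _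
  obtain rfl : H = H' := by rw [← flipped_transversal H, hT, flipped_transversal]
  obtain rfl : π = π' := Equiv.ext fun c =>
    (orderEmbOfFin _ _).injective (by rw [← mirroredOf_low, h, mirroredOf_low])
  rfl

lemma exists_mirroredOf_eq {τ : Equiv.Perm (Fin (2 * n))} (hτ : τ ∈ mirroredC n) :
    ∃ π H, mirroredOf π H = τ := by
  -- the set of values taken by `τ` on the first half
  have hA : IsTransversal (univ.filter fun x => IsLow (τ.symm x)) := fun x => by
    have : τ.symm x.rev = (τ.symm x).rev := τ.symm_apply_eq.2 (by rw [hτ, τ.apply_symm_apply])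
    simp only [mem_filter, mem_univ, true_and, this, isLow_rev, not_not]
  obtain ⟨H, hH⟩ : ∃ H, transversal H = univ.filter fun x => IsLow (τ.symm x) :=
    ⟨_, transversal_flipped hA⟩
  have hmem : ∀ c, (τ ∘ low) c ∈ transversal H := fun c => by simp [hH, isLow_low]
  obtain ⟨π, hπ⟩ := exists_perm_eq_orderEmbOfFin_comp (isTransversal_transversal H).card_eq
    (τ.injective.comp (Fin.castLE_injective _)) hmem
  exact ⟨π, H, eq_of_mem_mirroredC (mirroredOf_mem_mirroredC π H) hτ fun c =>
    (mirroredOf_low π H c).trans (hπ c).symm⟩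

lemma P_C_eq_image (S : Finset ℕ) :
    P_C n S = (fun p : Equiv.Perm (Fin n) × Finset (Fin n) => mirroredOf p.1 p.2) ''
      (peakSetEq n S ×ˢ Set.univ) := by
  ext τ
  constructor
  · rintro ⟨hτ, hpeak⟩
    obtain ⟨π, H, rfl⟩ := exists_mirroredOf_eq hτ
    exact ⟨(π, H), ⟨fun i => (isPeakFirst_mirroredOf π H i).symm.trans (hpeak i), trivial⟩, rfl⟩
  · rintro ⟨⟨π, H⟩, ⟨hπ, -⟩, rfl⟩
    exact ⟨mirroredOf_mem_mirroredC π H, fun i => (isPeakFirst_mirroredOf π H i).trans (hπ i)⟩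

theorem ncard_P_C (n : ℕ) (S : Finset ℕ) : (P_C n S).ncard = 2 ^ n * (peakSetEq n S).ncard := by
  rw [P_C_eq_image, Set.ncard_image_of_injective _ mirroredOf_injective, Set.ncard_prod,
    Set.ncard_univ, Nat.card_eq_fintype_card, Fintype.card_finset, Fintype.card_fin, mul_comm]

end TypeC

theorem stmt11_general (n : ℕ) (S : Finset ℕ) (hS : ∀ x ∈ S, 0 < x ∧ x < n) :
    (P_C n S).ncard = 2 ^ n * (peakSetEq n S).ncard ∧
    ∀ p : Polynomial ℚ,
      ((peakSetEq n S).ncard : ℚ) = p.eval (n : ℚ) * 2 ^ (n - S.card - 1) →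
      ((P_C n S).ncard : ℚ) = p.eval (n : ℚ) * 2 ^ (2 * n - S.card - 1) := by
  have hcard : S.card ≤ n - 1 := by
    simpa using card_le_card fun x hx => mem_Ioo.2 (hS x hx)
  refine ⟨TypeC.ncard_P_C n S, fun p hp => ?_⟩
  rw [TypeC.ncard_P_C, Nat.cast_mul, hp, show 2 * n - S.card - 1 = n + (n - S.card - 1) by omega,
    pow_add]
  push_cast
  ring

theorem stmt11 (n : ℕ) (hn : 2 ≤ n) (S : Finset ℕ) (hS : ∀ x ∈ S, 0 < x ∧ x < n) :
    (P_C n S).ncard = 2 ^ n * (peakSetEq n S).ncard ∧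
    ∀ p : Polynomial ℚ,
      ((peakSetEq n S).ncard : ℚ) = p.eval (n : ℚ) * 2 ^ (n - S.card - 1) →
      ((P_C n S).ncard : ℚ) = p.eval (n : ℚ) * 2 ^ (2 * n - S.card - 1) :=
  stmt11_general n S hS
end
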